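/- arXiv:2203.08938 — 5 statements merged into one kernel-verified Lean document; each statement's English description precedes it below -/
import Mathlib

section
/- Let u and v be nontrivial real-valued solutions of the same equation (τ₀ - λ)w = 0 on (a,b), with Prüfer angles θ_u, θ_v, and define N(u,v)(x) = ⌈(θ_v(x) - θ_u(x))/π⌉ - ⌊(θ_v(a) - θ_u(a))/π⌋ - 1. If u and v are linearly dependent, then N(u,v)(x) = -1 for all x ∈ (a,b); if u and v are linearly independent, then N(u,v)(x) = 0 for all x ∈ (a,b). -/
/-!
The Wronskian `W = u·pv - pu·v` of two solutions is constant, and in Prüfer variables it equals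
`ρᵤ ρᵥ sin (θᵤ - θᵥ)`, so it vanishes exactly where `(θᵥ - θᵤ)/π` is an integer. If `u` and `v` are
dependent, `W ≡ 0`, hence `(θᵥ - θᵤ)/π` is a continuous integer-valued function on `[a, b)`, thus a
constant `n`, and `N = ⌈n⌉ - ⌊n⌋ - 1 = -1`. If they are independent, `W` has no zero (at a zero,
`(v, pv)` is proportional to `(u, pu)`, and the ratio is constant), so `(θᵥ - θᵤ)/π` never meets an
integer: its floor is constant and its ceiling is its floor plus one, whence `N = 0`.
-/

open Real Set

theorem Convex.eq_of_hasDerivAt_eq_zero {E : Type*} [NormedAddCommGroup E] [NormedSpace ℝ E]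
    {s : Set ℝ} {f : ℝ → E} (hs : Convex ℝ s) (hf : ∀ x ∈ s, HasDerivAt f 0 x) {x y : ℝ}
    (hx : x ∈ s) (hy : y ∈ s) : f x = f y := by
  have := hs.norm_image_sub_le_of_norm_hasDerivWithin_le (C := 0)
    (fun z hz => (hf z hz).hasDerivWithinAt) (fun _ _ => norm_zero.le) hy hx
  simpa [sub_eq_zero] using this

theorem IsPreconnected.floor_eq_of_forall_notMem_range {X R : Type*} [TopologicalSpace X]
    [Ring R] [LinearOrder R] [IsStrictOrderedRing R] [FloorRing R] [TopologicalSpace R]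
    [OrderClosedTopology R] {s : Set X} {g : X → R} (hs : IsPreconnected s)
    (hg : ContinuousOn g s) (hint : ∀ y ∈ s, g y ∉ range ((↑) : ℤ → R)) {x y : X}
    (hx : x ∈ s) (hy : y ∈ s) : ⌊g y⌋ = ⌊g x⌋ := by
  rw [Int.floor_eq_iff]
  constructor
  · by_contra! h
    obtain ⟨z, hz, hgz⟩ := hs.intermediate_value hy hx hg ⟨h.le, Int.floor_le _⟩
    exact hint z hz ⟨_, hgz.symm⟩
  · by_contra! h
    obtain ⟨z, hz, hgz⟩ := hs.intermediate_value hx hy hg ⟨(Int.lt_floor_add_one _).le, h⟩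
    exact hint z hz ⟨⌊g x⌋ + 1, by push_cast; exact hgz.symm⟩

theorem sin_sub_eq_zero_iff_div_pi_mem_range {α β : ℝ} :
    sin (α - β) = 0 ↔ (β - α) / π ∈ range ((↑) : ℤ → ℝ) := by
  rw [sin_eq_zero_iff]
  refine ⟨fun ⟨n, hn⟩ => ⟨-n, ?_⟩, fun ⟨n, hn⟩ => ⟨-n, ?_⟩⟩
  · rw [Int.cast_neg, eq_div_iff pi_ne_zero]
    linarith
  · rw [eq_div_iff pi_ne_zero] at hn
    push_cast
    linarith

theorem eq_mul_and_eq_mul_of_mul_sub_mul_eq_zero {K : Type*} [Field K] {u pu v pv : K}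
    (hD : u ^ 2 + pu ^ 2 ≠ 0) (hW : u * pv - pu * v = 0) :
    v = (u * v + pu * pv) / (u ^ 2 + pu ^ 2) * u ∧
      pv = (u * v + pu * pv) / (u ^ 2 + pu ^ 2) * pu := by
  constructor <;> rw [div_mul_eq_mul_div, eq_div_iff hD]
  · linear_combination (-pu) * hW
  · linear_combination u * hW

namespace SturmLiouville

/-- `(u, pu)` solves `-(p u')' + q u = 0` on `s`, written as a first-order system for `u` and its
quasi-derivative `pu = p u'`. -/
def IsSolutionOn (p q : ℝ → ℝ) (s : Set ℝ) (u pu : ℝ → ℝ) : Prop :=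
  ∀ x ∈ s, HasDerivAt u (pu x / p x) x ∧ HasDerivAt pu (q x * u x) x

def wronskian (u pu v pv : ℝ → ℝ) (x : ℝ) : ℝ :=
  u x * pv x - pu x * v x

namespace IsSolutionOn

variable {p q u pu v pv : ℝ → ℝ} {s : Set ℝ}

theorem hasDerivAt_wronskian (hu : IsSolutionOn p q s u pu) (hv : IsSolutionOn p q s v pv)
    {x : ℝ} (hx : x ∈ s) : HasDerivAt (wronskian u pu v pv) 0 x := by
  obtain ⟨hu', hpu'⟩ := hu x hx
  obtain ⟨hv', hpv'⟩ := hv x hx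
  exact ((hu'.mul hpv').sub (hpu'.mul hv')).congr_deriv (by ring)

theorem wronskian_eq (hs : Convex ℝ s) (hu : IsSolutionOn p q s u pu)
    (hv : IsSolutionOn p q s v pv) {x y : ℝ} (hx : x ∈ s) (hy : y ∈ s) :
    wronskian u pu v pv x = wronskian u pu v pv y :=
  hs.eq_of_hasDerivAt_eq_zero (fun _ hz => hu.hasDerivAt_wronskian hv hz) hx hy

theorem wronskian_eq_zero_of_eq_const_mul (hu : IsSolutionOn p q s u pu)
    (hv : IsSolutionOn p q s v pv) {c : ℝ} (hc : ∀ y ∈ s, v y = c * u y) {x : ℝ}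
    (hx : x ∈ interior s) (hp : p x ≠ 0) : wronskian u pu v pv x = 0 := by
  have hxs := interior_subset hx
  have hv_eq : v =ᶠ[nhds x] fun y => c * u y :=
    Filter.eventually_of_mem (mem_interior_iff_mem_nhds.1 hx) hc
  have hderiv := (hv x hxs).1.unique (((hu x hxs).1.const_mul c).congr_of_eventuallyEq hv_eq)
  have hpv : pv x = c * pu x := by
    rwa [mul_div_assoc', div_left_inj' hp] at hderiv
  rw [wronskian, hpv, hc x hxs]
  ring

theorem exists_eq_const_mul_of_wronskian_eq_zero (hs : Convex ℝ s)
    (hu : IsSolutionOn p q s u pu) (hv : IsSolutionOn p q s v pv)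
    (hD : ∀ y ∈ s, u y ^ 2 + pu y ^ 2 ≠ 0) {x₀ : ℝ} (hx₀ : x₀ ∈ s)
    (hW : wronskian u pu v pv x₀ = 0) : ∃ c, ∀ y ∈ s, v y = c * u y := by
  set f : ℝ → ℝ := fun y => (u y * v y + pu y * pv y) / (u y ^ 2 + pu y ^ 2)
  have hprop : ∀ y ∈ s, v y = f y * u y ∧ pv y = f y * pu y := fun y hy =>
    eq_mul_and_eq_mul_of_mul_sub_mul_eq_zero (hD y hy)
      ((hu.wronskian_eq hs hv hy hx₀).trans hW)
  have hf : ∀ y ∈ s, HasDerivAt f 0 y := by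
    intro y hy
    obtain ⟨hu', hpu'⟩ := hu y hy
    obtain ⟨hv', hpv'⟩ := hv y hy
    refine (((hu'.mul hv').add (hpu'.mul hpv')).div ((hu'.pow 2).add (hpu'.pow 2))
      (hD y hy)).congr_deriv ?_
    simp only [Pi.add_apply, Pi.mul_apply, Pi.pow_apply]
    rw [(hprop y hy).1, (hprop y hy).2]
    field_simp
    ring
  exact ⟨f x₀, fun y hy => by rw [(hprop y hy).1, hs.eq_of_hasDerivAt_eq_zero hf hy hx₀]⟩

end IsSolutionOn

end SturmLiouville

open SturmLiouville
theorem stmt_6_general (a b lam : ℝ) (p₀ q₀ r₀ : ℝ → ℝ)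
    (u v pu pv ρu ρv θu θv : ℝ → ℝ)
    (hp : ∀ x ∈ Ico a b, 0 < p₀ x)
    (hu : ∀ x ∈ Ico a b, HasDerivAt u (pu x / p₀ x) x)
    (hpu : ∀ x ∈ Ico a b, HasDerivAt pu ((q₀ x - lam * r₀ x) * u x) x)
    (hv : ∀ x ∈ Ico a b, HasDerivAt v (pv x / p₀ x) x)
    (hpv : ∀ x ∈ Ico a b, HasDerivAt pv ((q₀ x - lam * r₀ x) * v x) x)
    (hρu : ∀ x ∈ Ico a b, 0 < ρu x) (hρv : ∀ x ∈ Ico a b, 0 < ρv x)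
    (hus : ∀ x ∈ Ico a b, u x = ρu x * Real.sin (θu x))
    (huc : ∀ x ∈ Ico a b, pu x = ρu x * Real.cos (θu x))
    (hvs : ∀ x ∈ Ico a b, v x = ρv x * Real.sin (θv x))
    (hvc : ∀ x ∈ Ico a b, pv x = ρv x * Real.cos (θv x))
    (hθu : ContinuousOn θu (Ico a b)) (hθv : ContinuousOn θv (Ico a b)) :
    ((∃ c : ℝ, ∀ x ∈ Ico a b, v x = c * u x) →
        ∀ x ∈ Ioo a b, ⌈(θv x - θu x) / π⌉ - ⌊(θv a - θu a) / π⌋ - 1 = -1) ∧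
    (¬ (∃ c : ℝ, ∀ x ∈ Ico a b, v x = c * u x) →
        ∀ x ∈ Ioo a b, ⌈(θv x - θu x) / π⌉ - ⌊(θv a - θu a) / π⌋ - 1 = 0) := by
  have hU : IsSolutionOn p₀ (fun x => q₀ x - lam * r₀ x) (Ico a b) u pu :=
    fun x hx => ⟨hu x hx, hpu x hx⟩
  have hV : IsSolutionOn p₀ (fun x => q₀ x - lam * r₀ x) (Ico a b) v pv :=
    fun x hx => ⟨hv x hx, hpv x hx⟩
  set g : ℝ → ℝ := fun y => (θv y - θu y) / π
  have hg : ContinuousOn g (Ico a b) := (hθv.sub hθu).div_const π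
  have hW_eq_zero_iff : ∀ y ∈ Ico a b,
      wronskian u pu v pv y = 0 ↔ g y ∈ range ((↑) : ℤ → ℝ) := by
    intro y hy
    have hW : wronskian u pu v pv y = ρu y * ρv y * sin (θu y - θv y) := by
      rw [wronskian, hus y hy, huc y hy, hvs y hy, hvc y hy, sin_sub]
      ring
    rw [hW, ← sin_sub_eq_zero_iff_div_pi_mem_range]
    simp [(hρu y hy).ne', (hρv y hy).ne']
  refine ⟨fun ⟨c, hc⟩ x hx => ?_, fun hindep x hx => ?_⟩
  · have hxI : x ∈ Ico a b := Ioo_subset_Ico_self hx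
    have ha : a ∈ Ico a b := ⟨le_rfl, hx.1.trans hx.2⟩
    have hWx : wronskian u pu v pv x = 0 :=
      hU.wronskian_eq_zero_of_eq_const_mul hV hc (by rwa [interior_Ico]) (hp x hxI).ne'
    have hint : MapsTo g (Ico a b) (range ((↑) : ℤ → ℝ)) := fun y hy =>
      (hW_eq_zero_iff y hy).1 (by rw [hU.wronskian_eq (convex_Ico a b) hV hy hxI, hWx])
    obtain ⟨n, hn⟩ := hint ha
    have hgx : g x = n := (isPreconnected_Ico.constant_of_mapsTo
      Int.isClosedEmbedding_coe_real.isInducing.isDiscrete_range hg hint hxI ha).trans hn.symm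
    change ⌈g x⌉ - ⌊g a⌋ - 1 = -1
    rw [hgx, ← hn, Int.ceil_intCast, Int.floor_intCast]
    ring
  · have hxI : x ∈ Ico a b := Ioo_subset_Ico_self hx
    have ha : a ∈ Ico a b := ⟨le_rfl, hx.1.trans hx.2⟩
    have hD : ∀ y ∈ Ico a b, u y ^ 2 + pu y ^ 2 ≠ 0 := fun y hy => by
      rw [hus y hy, huc y hy, mul_pow, mul_pow, ← mul_add, sin_sq_add_cos_sq, mul_one]
      exact pow_ne_zero 2 (hρu y hy).ne'
    have hnot : ∀ y ∈ Ico a b, g y ∉ range ((↑) : ℤ → ℝ) := fun y hy hgy =>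
      hindep (hU.exists_eq_const_mul_of_wronskian_eq_zero (convex_Ico a b) hV hD hy
        ((hW_eq_zero_iff y hy).2 hgy))
    change ⌈g x⌉ - ⌊g a⌋ - 1 = 0
    rw [(Int.ceil_eq_floor_add_one_iff_notMem (g x)).2 (hnot x hxI),
      isPreconnected_Ico.floor_eq_of_forall_notMem_range hg hnot ha hxI]
    ring

/-- Lemma 2.2 ("gabel") of the paper. Let `u` and `v` be nontrivial real
solutions of the same Sturm–Liouville equation `(τ₀ - λ)w = 0` on `(a,b)`,
regular at `a` (so everything extends to `[a,b)`), with Prüfer representations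
`u = ρᵤ sin θᵤ`, `p₀u' = ρᵤ cos θᵤ` (similarly for `v`), `ρ > 0` and continuous
Prüfer angles. Set
`N(u,v)(x) = ⌈(θᵥ(x) - θᵤ(x))/π⌉ - ⌊(θᵥ(a) - θᵤ(a))/π⌋ - 1`.
If `u` and `v` are linearly dependent then `N(u,v)(x) = -1` on `(a,b)`;
otherwise `N(u,v)(x) = 0` on `(a,b)`. -/
theorem stmt_6 (a b lam : ℝ) (hab : a < b) (p₀ q₀ r₀ : ℝ → ℝ)
    (u v pu pv ρu ρv θu θv : ℝ → ℝ)
    (hp : ∀ x ∈ Ico a b, 0 < p₀ x) (hr : ∀ x ∈ Ico a b, 0 < r₀ x)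
    (hu : ∀ x ∈ Ico a b, HasDerivAt u (pu x / p₀ x) x)
    (hpu : ∀ x ∈ Ico a b, HasDerivAt pu ((q₀ x - lam * r₀ x) * u x) x)
    (hv : ∀ x ∈ Ico a b, HasDerivAt v (pv x / p₀ x) x)
    (hpv : ∀ x ∈ Ico a b, HasDerivAt pv ((q₀ x - lam * r₀ x) * v x) x)
    (hρu : ∀ x ∈ Ico a b, 0 < ρu x) (hρv : ∀ x ∈ Ico a b, 0 < ρv x)
    (hus : ∀ x ∈ Ico a b, u x = ρu x * Real.sin (θu x))
    (huc : ∀ x ∈ Ico a b, pu x = ρu x * Real.cos (θu x))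
    (hvs : ∀ x ∈ Ico a b, v x = ρv x * Real.sin (θv x))
    (hvc : ∀ x ∈ Ico a b, pv x = ρv x * Real.cos (θv x))
    (hθu : ContinuousOn θu (Ico a b)) (hθv : ContinuousOn θv (Ico a b)) :
    ((∃ c : ℝ, ∀ x ∈ Ico a b, v x = c * u x) →
        ∀ x ∈ Ioo a b, ⌈(θv x - θu x) / π⌉ - ⌊(θv a - θu a) / π⌋ - 1 = -1) ∧
    (¬ (∃ c : ℝ, ∀ x ∈ Ico a b, v x = c * u x) →
        ∀ x ∈ Ioo a b, ⌈(θv x - θu x) / π⌉ - ⌊(θv a - θu a) / π⌋ - 1 = 0) :=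
  stmt_6_general a b lam p₀ q₀ r₀ u v pu pv ρu ρv θu θv hp hu hpu hv hpv hρu hρv hus huc hvs hvc hθu
    hθv
end

section
/- Let θ₀, θ₁ be Prüfer angles of nontrivial real solutions u₀, u₁ of (τⱼ - λⱼ)u = 0, j = 0,1, and suppose p₀ ≥ p₁ and q₀ - λ₀r₀ ≥ q₁ - λ₁r₁ a.e. Then the difference of Prüfer angles satisfies: for a ≤ ξ < x < b and k ∈ ℤ, if θ₁(ξ) - θ₀(ξ) ≥ kπ then θ₁(x) - θ₀(x) ≥ kπ. Consequently N(u₀,u₁)(x) = ⌈(θ₁(x)-θ₀(x))/π⌉ - ⌊(θ₁(a)-θ₀(a))/π⌋ - 1 is an increasing function of x with N(u₀,u₁)(x) ≥ -1 for all x ∈ (a,b). -/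
open Real Set MeasureTheory

/-- Grönwall-type nonnegativity preservation with only integrable coefficient. -/
lemma prufer_aux_nonneg {s t : ℝ} (hst : s ≤ t) {w d g : ℝ → ℝ}
    (hw : ∀ u ∈ Icc s t, HasDerivAt w (d u) u)
    (hd : IntegrableOn d (Icc s t) volume)
    (hg : IntegrableOn g (Icc s t) volume)
    (hg0 : ∀ u ∈ Icc s t, 0 ≤ g u)
    (hle : ∀ u ∈ Icc s t, -(g u * |w u|) ≤ d u)
    (h0 : 0 ≤ w s) : 0 ≤ w t := by
  by_contra hneg
  push_neg at hneg
  have hwc : ContinuousOn w (Icc s t) := fun u hu => (hw u hu).continuousAt.continuousWithinAt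
  -- zeros of w
  set Z : Set ℝ := {u | u ∈ Icc s t ∧ w u = 0} with hZ
  have hZsub : Z ⊆ Icc s t := fun u hu => hu.1
  have hZne : Z.Nonempty := by
    have h0' : (0:ℝ) ∈ Icc (w t) (w s) := ⟨hneg.le, h0⟩
    obtain ⟨c, hc, hc0⟩ := intermediate_value_Icc' hst hwc h0'
    exact ⟨c, hc, hc0⟩
  have hZcl : IsClosed Z := by
    rw [← isSeqClosed_iff_isClosed]
    intro xn x hxn hlim
    have hxIcc : x ∈ Icc s t := isClosed_Icc.isSeqClosed (fun n => (hxn n).1) hlim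
    refine ⟨hxIcc, ?_⟩
    have hca : ContinuousAt w x := (hw x hxIcc).continuousAt
    have : Filter.Tendsto (fun n => w (xn n)) Filter.atTop (nhds (w x)) :=
      (hca.tendsto).comp hlim
    have heq : (fun n => w (xn n)) = fun _ => (0:ℝ) := funext fun n => (hxn n).2
    rw [heq] at this
    exact (tendsto_nhds_unique tendsto_const_nhds this).symm
  have hZbdd : BddAbove Z := ⟨t, fun u hu => hu.1.2⟩
  set c := sSup Z with hc
  have hcZ : c ∈ Z := hZcl.csSup_mem hZne hZbdd
  have hcIcc : c ∈ Icc s t := hcZ.1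
  have hwc0 : w c = 0 := hcZ.2
  have hct : c < t := lt_of_le_of_ne hcIcc.2 (fun h => by rw [h] at hwc0; linarith)
  -- w < 0 on (c, t]
  have hneg' : ∀ u ∈ Ioc c t, w u < 0 := by
    intro u hu
    by_contra hge
    push_neg at hge
    have huIcc : u ∈ Icc s t := ⟨hcIcc.1.trans hu.1.le, hu.2⟩
    have h0' : (0:ℝ) ∈ Icc (w t) (w u) := ⟨hneg.le, hge⟩
    obtain ⟨z, hz, hz0⟩ := intermediate_value_Icc' hu.2 (hwc.mono (Icc_subset_Icc huIcc.1 le_rfl)) h0'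
    have hzZ : z ∈ Z := ⟨⟨huIcc.1.trans hz.1, hz.2⟩, hz0⟩
    have : z ≤ c := le_csSup hZbdd hzZ
    have : c < z := lt_of_lt_of_le hu.1 hz.1
    linarith
  -- primitive of g
  have hgct : IntegrableOn g (uIcc c t) volume := by
    rw [uIcc_of_le hct.le]
    exact hg.mono_set (Icc_subset_Icc hcIcc.1 le_rfl)
  have hGcont : ContinuousOn (fun x => ∫ v in c..x, g v) (uIcc c t) :=
    intervalIntegral.continuousOn_primitive_interval hgct
  have hGc : (∫ v in c..c, g v) = 0 := intervalIntegral.integral_same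
  -- find t₁ ∈ (c, t] with small integral
  have hcwa : ContinuousWithinAt (fun x => ∫ v in c..x, g v) (Ioc c t) c := by
    refine (hGcont c ?_).mono ?_
    · rw [uIcc_of_le hct.le]; exact left_mem_Icc.mpr hct.le
    · rw [uIcc_of_le hct.le]; exact Ioc_subset_Icc_self
  have hNB : (nhdsWithin c (Ioc c t)).NeBot := by
    rw [← mem_closure_iff_nhdsWithin_neBot, closure_Ioc hct.ne]
    exact left_mem_Icc.mpr hct.le
  have hev : ∀ᶠ x in nhdsWithin c (Ioc c t), (∫ v in c..x, g v) < 1/2 := by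
    have : Filter.Tendsto (fun x => ∫ v in c..x, g v) (nhdsWithin c (Ioc c t)) (nhds 0) := by
      rw [← hGc]; exact hcwa
    exact this.eventually_lt_const (by norm_num)
  obtain ⟨t₁, ht₁G, ht₁mem⟩ := (hev.and eventually_mem_nhdsWithin).exists
  -- minimum of w on [c, t₁]
  have ht₁Icc : Icc c t₁ ⊆ Icc s t := Icc_subset_Icc hcIcc.1 ht₁mem.2
  obtain ⟨t', ht'mem, ht'min⟩ := isCompact_Icc.exists_isMinOn (nonempty_Icc.mpr ht₁mem.1.le)
    (hwc.mono ht₁Icc)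
  have hm : w t' < 0 := (ht'min (right_mem_Icc.mpr ht₁mem.1.le)).trans_lt
    (hneg' t₁ ht₁mem)
  -- FTC on [c, t']
  have hsubIcc : Icc c t' ⊆ Icc s t := Icc_subset_Icc hcIcc.1 (ht'mem.2.trans ht₁mem.2)
  have hdint : IntervalIntegrable d volume c t' := by
    rw [intervalIntegrable_iff_integrableOn_Icc_of_le ht'mem.1]
    exact hd.mono_set hsubIcc
  have hftc : (∫ u in c..t', d u) = w t' - w c := by
    refine intervalIntegral.integral_eq_sub_of_hasDerivAt (fun u hu => ?_) hdint
    rw [uIcc_of_le ht'mem.1] at hu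
    exact hw u (hsubIcc hu)
  -- pointwise bound on [c, t']
  have hbd : ∀ u ∈ Icc c t', g u * w t' ≤ d u := by
    intro u hu
    have huIcc : u ∈ Icc s t := hsubIcc hu
    have hwu_le : w u ≤ 0 := by
      rcases eq_or_lt_of_le hu.1 with h | h
      · rw [← h, hwc0]
      · exact (hneg' u ⟨h, (hu.2.trans ht'mem.2).trans ht₁mem.2⟩).le
    have hwu_ge : w t' ≤ w u := ht'min ⟨hu.1, hu.2.trans ht'mem.2⟩
    have habs : |w u| ≤ -(w t') := by rw [abs_of_nonpos hwu_le]; linarith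
    have : g u * |w u| ≤ g u * (-(w t')) := mul_le_mul_of_nonneg_left habs (hg0 u huIcc)
    have := hle u huIcc
    nlinarith
  have hgint' : IntervalIntegrable (fun u => g u * w t') volume c t' := by
    rw [intervalIntegrable_iff_integrableOn_Icc_of_le ht'mem.1]
    exact (hg.mono_set hsubIcc).mul_const _
  have hmono := intervalIntegral.integral_mono_on ht'mem.1 hgint' hdint hbd
  have hGt' : (∫ u in c..t', g u * w t') = (∫ u in c..t', g u) * w t' := by
    rw [← intervalIntegral.integral_mul_const]
  have hG0 : 0 ≤ ∫ u in c..t', g u :=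
    intervalIntegral.integral_nonneg ht'mem.1 (fun u hu => hg0 u (hsubIcc hu))
  have hGle : (∫ u in c..t', g u) ≤ 1/2 := by
    have hsplit : (∫ u in c..t', g u) + (∫ u in t'..t₁, g u) = ∫ u in c..t₁, g u := by
      apply intervalIntegral.integral_add_adjacent_intervals
      · rw [intervalIntegrable_iff_integrableOn_Icc_of_le ht'mem.1]
        exact hg.mono_set hsubIcc
      · rw [intervalIntegrable_iff_integrableOn_Icc_of_le ht'mem.2]
        exact hg.mono_set (Icc_subset_Icc (hcIcc.1.trans ht'mem.1) ht₁mem.2)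
    have h2 : 0 ≤ ∫ u in t'..t₁, g u :=
      intervalIntegral.integral_nonneg ht'mem.2
        (fun u hu => hg0 u ⟨hcIcc.1.trans (ht'mem.1.trans hu.1), hu.2.trans ht₁mem.2⟩)
    linarith [ht₁G.le]
  -- contradiction
  rw [hftc, hwc0, hGt'] at hmono
  nlinarith [mul_nonneg (sub_nonneg.mpr hGle) (neg_nonneg.mpr hm.le)]

/-- Strict version. -/
lemma prufer_aux_pos {s t : ℝ} (hst : s ≤ t) {w d g : ℝ → ℝ}
    (hw : ∀ u ∈ Icc s t, HasDerivAt w (d u) u)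
    (hd : IntegrableOn d (Icc s t) volume)
    (hg : IntegrableOn g (Icc s t) volume)
    (hg0 : ∀ u ∈ Icc s t, 0 ≤ g u)
    (hle : ∀ u ∈ Icc s t, -(g u * |w u|) ≤ d u)
    (h0 : 0 < w s) : 0 < w t := by
  by_contra hnp
  push_neg at hnp
  have hnn : 0 ≤ w t := prufer_aux_nonneg hst hw hd hg hg0 hle h0.le
  have hwt : w t = 0 := le_antisymm hnp hnn
  have hwc : ContinuousOn w (Icc s t) := fun u hu => (hw u hu).continuousAt.continuousWithinAt
  set Z : Set ℝ := {u | u ∈ Icc s t ∧ w u = 0} with hZ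
  have hZne : Z.Nonempty := ⟨t, right_mem_Icc.mpr hst, hwt⟩
  have hZcl : IsClosed Z := by
    rw [← isSeqClosed_iff_isClosed]
    intro xn x hxn hlim
    have hxIcc : x ∈ Icc s t := isClosed_Icc.isSeqClosed (fun n => (hxn n).1) hlim
    refine ⟨hxIcc, ?_⟩
    have hca : ContinuousAt w x := (hw x hxIcc).continuousAt
    have : Filter.Tendsto (fun n => w (xn n)) Filter.atTop (nhds (w x)) :=
      (hca.tendsto).comp hlim
    have heq : (fun n => w (xn n)) = fun _ => (0:ℝ) := funext fun n => (hxn n).2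
    rw [heq] at this
    exact (tendsto_nhds_unique tendsto_const_nhds this).symm
  have hZbdd : BddBelow Z := ⟨s, fun u hu => hu.1.1⟩
  set c := sInf Z with hc
  have hcZ : c ∈ Z := hZcl.csInf_mem hZne hZbdd
  have hcIcc : c ∈ Icc s t := hcZ.1
  have hwc0 : w c = 0 := hcZ.2
  have hsc : s < c := lt_of_le_of_ne hcIcc.1 (fun h => by rw [← h] at hwc0; linarith)
  -- w > 0 on [s, c)
  have hpos' : ∀ u ∈ Ico s c, 0 < w u := by
    intro u hu
    by_contra hge
    push_neg at hge
    have huIcc : u ∈ Icc s t := ⟨hu.1, hu.2.le.trans hcIcc.2⟩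
    have h0' : (0:ℝ) ∈ Icc (w u) (w s) := ⟨hge, h0.le⟩
    obtain ⟨z, hz, hz0⟩ := intermediate_value_Icc' hu.1 (hwc.mono (Icc_subset_Icc le_rfl huIcc.2)) h0'
    have hzZ : z ∈ Z := ⟨⟨hz.1, hz.2.trans huIcc.2⟩, hz0⟩
    have : c ≤ z := csInf_le hZbdd hzZ
    have : z < c := lt_of_le_of_lt hz.2 hu.2
    linarith
  -- primitive of g towards c
  have hgsc : IntegrableOn g (uIcc s c) volume := by
    rw [uIcc_of_le hsc.le]
    exact hg.mono_set (Icc_subset_Icc le_rfl hcIcc.2)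
  have hGcont : ContinuousOn (fun x => ∫ v in x..c, g v) (uIcc s c) :=
    intervalIntegral.continuousOn_primitive_interval_left hgsc
  have hcwa : ContinuousWithinAt (fun x => ∫ v in x..c, g v) (Ico s c) c := by
    refine (hGcont c ?_).mono ?_
    · rw [uIcc_of_le hsc.le]; exact right_mem_Icc.mpr hsc.le
    · rw [uIcc_of_le hsc.le]; exact Ico_subset_Icc_self
  have hNB : (nhdsWithin c (Ico s c)).NeBot := by
    rw [← mem_closure_iff_nhdsWithin_neBot, closure_Ico hsc.ne]
    exact right_mem_Icc.mpr hsc.le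
  have hev : ∀ᶠ x in nhdsWithin c (Ico s c), (∫ v in x..c, g v) < 1/2 := by
    have h0' : (∫ v in c..c, g v) = 0 := intervalIntegral.integral_same
    have : Filter.Tendsto (fun x => ∫ v in x..c, g v) (nhdsWithin c (Ico s c)) (nhds 0) := by
      rw [← h0']; exact hcwa
    exact this.eventually_lt_const (by norm_num)
  obtain ⟨t₁, ht₁G, ht₁mem⟩ := (hev.and eventually_mem_nhdsWithin).exists
  -- maximum of w on [t₁, c]
  have ht₁Icc : Icc t₁ c ⊆ Icc s t := Icc_subset_Icc ht₁mem.1 hcIcc.2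
  obtain ⟨t', ht'mem, ht'max⟩ := isCompact_Icc.exists_isMaxOn (nonempty_Icc.mpr ht₁mem.2.le)
    (hwc.mono ht₁Icc)
  have hM : 0 < w t' := lt_of_lt_of_le (hpos' t₁ ht₁mem) (ht'max (left_mem_Icc.mpr ht₁mem.2.le))
  -- FTC on [t', c]
  have hsubIcc : Icc t' c ⊆ Icc s t := Icc_subset_Icc (ht₁mem.1.trans ht'mem.1) hcIcc.2
  have hdint : IntervalIntegrable d volume t' c := by
    rw [intervalIntegrable_iff_integrableOn_Icc_of_le ht'mem.2]
    exact hd.mono_set hsubIcc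
  have hftc : (∫ u in t'..c, d u) = w c - w t' := by
    refine intervalIntegral.integral_eq_sub_of_hasDerivAt (fun u hu => ?_) hdint
    rw [uIcc_of_le ht'mem.2] at hu
    exact hw u (hsubIcc hu)
  -- pointwise bound on [t', c]
  have hbd : ∀ u ∈ Icc t' c, -(g u * w t') ≤ d u := by
    intro u hu
    have huIcc : u ∈ Icc s t := hsubIcc hu
    have hwu_nonneg : 0 ≤ w u := by
      rcases eq_or_lt_of_le hu.2 with h | h
      · rw [h, hwc0]
      · exact (hpos' u ⟨ht₁mem.1.trans (ht'mem.1.trans hu.1), h⟩).le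
    have hwu_le : w u ≤ w t' := ht'max ⟨ht'mem.1.trans hu.1, hu.2⟩
    have habs : |w u| ≤ w t' := by rw [abs_of_nonneg hwu_nonneg]; exact hwu_le
    have h1 : g u * |w u| ≤ g u * w t' := mul_le_mul_of_nonneg_left habs (hg0 u huIcc)
    have h2 := hle u huIcc
    linarith
  have hgint' : IntervalIntegrable (fun u => -(g u * w t')) volume t' c := by
    rw [intervalIntegrable_iff_integrableOn_Icc_of_le ht'mem.2]
    exact ((hg.mono_set hsubIcc).mul_const _).neg
  have hmono := intervalIntegral.integral_mono_on ht'mem.2 hgint' hdint hbd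
  have hGt' : (∫ u in t'..c, -(g u * w t')) = -((∫ u in t'..c, g u) * w t') := by
    rw [← intervalIntegral.integral_mul_const, ← intervalIntegral.integral_neg]
  have hG0 : 0 ≤ ∫ u in t'..c, g u :=
    intervalIntegral.integral_nonneg ht'mem.2 (fun u hu => hg0 u (hsubIcc hu))
  have hGle : (∫ u in t'..c, g u) ≤ 1/2 := by
    have hsplit : (∫ u in t₁..t', g u) + (∫ u in t'..c, g u) = ∫ u in t₁..c, g u := by
      apply intervalIntegral.integral_add_adjacent_intervals
      · rw [intervalIntegrable_iff_integrableOn_Icc_of_le ht'mem.1]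
        exact hg.mono_set (Icc_subset_Icc ht₁mem.1 (ht'mem.2.trans hcIcc.2))
      · rw [intervalIntegrable_iff_integrableOn_Icc_of_le ht'mem.2]
        exact hg.mono_set hsubIcc
    have h2 : 0 ≤ ∫ u in t₁..t', g u :=
      intervalIntegral.integral_nonneg ht'mem.1
        (fun u hu => hg0 u ⟨ht₁mem.1.trans hu.1, (hu.2.trans ht'mem.2).trans hcIcc.2⟩)
    linarith [ht₁G.le]
  rw [hftc, hwc0, hGt'] at hmono
  nlinarith [mul_nonneg (sub_nonneg.mpr hGle) hM.le]

set_option maxHeartbeats 1000000 in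
/-- Lemma 2.3 (i) of the paper. Let `θ₀`, `θ₁` be Prüfer angles of nontrivial
real solutions of `(τⱼ - λⱼ)u = 0`, i.e. they satisfy the Prüfer equations
`θⱼ' = (1/pⱼ) cos²θⱼ - (qⱼ - λⱼrⱼ) sin²θⱼ`, where the coefficients satisfy
`p₀ ≥ p₁ > 0` and `q₀ - λ₀r₀ ≥ q₁ - λ₁r₁`. Then crossings of multiples of `π`
of the angle difference are preserved to the right, the relative counting
function `N(u₀,u₁)(x) = ⌈(θ₁(x)-θ₀(x))/π⌉ - ⌊(θ₁(a)-θ₀(a))/π⌋ - 1` is an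
increasing function on `(a,b)`, and `N(u₀,u₁)(x) ≥ -1` there. -/
theorem stmt_8 (a b lam₀ lam₁ : ℝ) (hab : a < b)
    (p₀ q₀ r₀ p₁ q₁ r₁ θ₀ θ₁ : ℝ → ℝ)
    (hp₁ : ∀ x ∈ Ico a b, 0 < p₁ x) (hp₀ : ∀ x ∈ Ico a b, 0 < p₀ x)
    (hr₀ : ∀ x ∈ Ico a b, 0 < r₀ x) (hr₁ : ∀ x ∈ Ico a b, 0 < r₁ x)
    (hip₀ : LocallyIntegrableOn (fun x => 1 / p₀ x) (Ico a b) volume)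
    (hip₁ : LocallyIntegrableOn (fun x => 1 / p₁ x) (Ico a b) volume)
    (hiq₀ : LocallyIntegrableOn q₀ (Ico a b) volume)
    (hiq₁ : LocallyIntegrableOn q₁ (Ico a b) volume)
    (hir₀ : LocallyIntegrableOn r₀ (Ico a b) volume)
    (hir₁ : LocallyIntegrableOn r₁ (Ico a b) volume)
    (hθ₀ : ∀ x ∈ Ico a b, HasDerivAt θ₀
      (1 / p₀ x * Real.cos (θ₀ x) ^ 2 - (q₀ x - lam₀ * r₀ x) * Real.sin (θ₀ x) ^ 2) x)
    (hθ₁ : ∀ x ∈ Ico a b, HasDerivAt θ₁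
      (1 / p₁ x * Real.cos (θ₁ x) ^ 2 - (q₁ x - lam₁ * r₁ x) * Real.sin (θ₁ x) ^ 2) x)
    (hpmono : ∀ x ∈ Ico a b, p₁ x ≤ p₀ x)
    (hqmono : ∀ x ∈ Ico a b, q₁ x - lam₁ * r₁ x ≤ q₀ x - lam₀ * r₀ x) :
    (∀ ξ ∈ Ico a b, ∀ x ∈ Ico a b, ξ < x → ∀ k : ℤ,
        (k : ℝ) * π ≤ θ₁ ξ - θ₀ ξ → (k : ℝ) * π ≤ θ₁ x - θ₀ x) ∧
    MonotoneOn (fun x => ⌈(θ₁ x - θ₀ x) / π⌉ - ⌊(θ₁ a - θ₀ a) / π⌋ - 1) (Ioo a b) ∧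
    (∀ x ∈ Ioo a b, -1 ≤ ⌈(θ₁ x - θ₀ x) / π⌉ - ⌊(θ₁ a - θ₀ a) / π⌋ - 1) := by
  have hπ : (0:ℝ) < π := Real.pi_pos
  have key : ∀ ξ ∈ Ico a b, ∀ x ∈ Ico a b, ξ ≤ x → ∀ k : ℤ,
      ((k : ℝ) * π ≤ θ₁ ξ - θ₀ ξ → (k : ℝ) * π ≤ θ₁ x - θ₀ x) ∧
      ((k : ℝ) * π < θ₁ ξ - θ₀ ξ → (k : ℝ) * π < θ₁ x - θ₀ x) := by
    intro ξ hξ x hx hξx k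
    have hsub : Icc ξ x ⊆ Ico a b := fun u hu => ⟨hξ.1.trans hu.1, lt_of_le_of_lt hu.2 hx.2⟩
    have hcomp : IsCompact (Icc ξ x) := isCompact_Icc
    set w : ℝ → ℝ := fun u => θ₁ u - θ₀ u - (k:ℝ) * π with hwdef
    set D : ℝ → ℝ := fun u =>
      (1 / p₁ u * Real.cos (θ₁ u) ^ 2 - (q₁ u - lam₁ * r₁ u) * Real.sin (θ₁ u) ^ 2) -
      (1 / p₀ u * Real.cos (θ₀ u) ^ 2 - (q₀ u - lam₀ * r₀ u) * Real.sin (θ₀ u) ^ 2) with hDdef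
    set g : ℝ → ℝ := fun u => 1 / p₁ u + |q₀ u - lam₀ * r₀ u| with hgdef
    have hw : ∀ u ∈ Icc ξ x, HasDerivAt w (D u) u := by
      intro u hu
      exact ((hθ₁ u (hsub hu)).sub (hθ₀ u (hsub hu))).sub_const ((k:ℝ) * π)
    have hθ₀c : ContinuousOn θ₀ (Icc ξ x) :=
      fun u hu => (hθ₀ u (hsub hu)).continuousAt.continuousWithinAt
    have hθ₁c : ContinuousOn θ₁ (Icc ξ x) :=
      fun u hu => (hθ₁ u (hsub hu)).continuousAt.continuousWithinAt
    have Ip₀ : IntegrableOn (fun u => 1 / p₀ u) (Icc ξ x) volume :=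
      hip₀.integrableOn_compact_subset hsub hcomp
    have Ip₁ : IntegrableOn (fun u => 1 / p₁ u) (Icc ξ x) volume :=
      hip₁.integrableOn_compact_subset hsub hcomp
    have Iq₀ : IntegrableOn q₀ (Icc ξ x) volume := hiq₀.integrableOn_compact_subset hsub hcomp
    have Iq₁ : IntegrableOn q₁ (Icc ξ x) volume := hiq₁.integrableOn_compact_subset hsub hcomp
    have Ir₀ : IntegrableOn r₀ (Icc ξ x) volume := hir₀.integrableOn_compact_subset hsub hcomp
    have Ir₁ : IntegrableOn r₁ (Icc ξ x) volume := hir₁.integrableOn_compact_subset hsub hcomp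
    have IA₀ : IntegrableOn (fun u => q₀ u - lam₀ * r₀ u) (Icc ξ x) volume :=
      Iq₀.sub (Ir₀.const_mul lam₀)
    have IA₁ : IntegrableOn (fun u => q₁ u - lam₁ * r₁ u) (Icc ξ x) volume :=
      Iq₁.sub (Ir₁.const_mul lam₁)
    have hgint : IntegrableOn g (Icc ξ x) volume := Ip₁.add IA₀.abs
    have c1 : ContinuousOn (fun u => Real.cos (θ₁ u) ^ 2) (Icc ξ x) :=
      (Real.continuous_cos.comp_continuousOn hθ₁c).pow 2
    have c0 : ContinuousOn (fun u => Real.cos (θ₀ u) ^ 2) (Icc ξ x) :=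
      (Real.continuous_cos.comp_continuousOn hθ₀c).pow 2
    have s1 : ContinuousOn (fun u => Real.sin (θ₁ u) ^ 2) (Icc ξ x) :=
      (Real.continuous_sin.comp_continuousOn hθ₁c).pow 2
    have s0 : ContinuousOn (fun u => Real.sin (θ₀ u) ^ 2) (Icc ξ x) :=
      (Real.continuous_sin.comp_continuousOn hθ₀c).pow 2
    have hDint : IntegrableOn D (Icc ξ x) volume :=
      ((Ip₁.mul_continuousOn c1 hcomp).sub (IA₁.mul_continuousOn s1 hcomp)).sub
        ((Ip₀.mul_continuousOn c0 hcomp).sub (IA₀.mul_continuousOn s0 hcomp))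
    have hg0 : ∀ u ∈ Icc ξ x, 0 ≤ g u := fun u hu =>
      add_nonneg (one_div_pos.mpr (hp₁ u (hsub hu))).le (abs_nonneg _)
    have hle : ∀ u ∈ Icc ξ x, -(g u * |w u|) ≤ D u := by
      intro u hu
      have hu' := hsub hu
      have hp₁u := hp₁ u hu'
      have hp₀u := hp₀ u hu'
      have hP : 1 / p₀ u ≤ 1 / p₁ u := one_div_le_one_div_of_le hp₁u (hpmono u hu')
      have hP1 : (0:ℝ) < 1 / p₀ u := one_div_pos.mpr hp₀u
      have hA : q₁ u - lam₁ * r₁ u ≤ q₀ u - lam₀ * r₀ u := hqmono u hu'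
      have hsin : Real.sin (θ₀ u) ^ 2 - Real.sin (θ₁ u) ^ 2
          = Real.sin (θ₀ u + θ₁ u) * Real.sin (θ₀ u - θ₁ u) := by
        rw [Real.sin_add, Real.sin_sub]
        nlinarith [Real.sin_sq_add_cos_sq (θ₀ u), Real.sin_sq_add_cos_sq (θ₁ u)]
      have hwθ : θ₀ u - θ₁ u = -(w u + (k:ℝ) * π) := by
        show θ₀ u - θ₁ u = -((θ₁ u - θ₀ u - (k:ℝ) * π) + (k:ℝ) * π)
        ring
      have habs2 : |Real.sin (θ₀ u - θ₁ u)| = |Real.sin (w u)| := by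
        rw [hwθ, Real.sin_neg, abs_neg, Real.sin_add_int_mul_pi, abs_mul]
        have h1 : |((-1:ℝ)) ^ k| = 1 := by
          rcases Int.even_or_odd k with h | h
          · rw [h.neg_one_zpow]; simp
          · rw [Odd.neg_one_zpow h]; simp
        rw [h1, one_mul]
      have hsinw : |Real.sin (w u)| ≤ |w u| := Real.abs_sin_le_abs
      have hSS : |Real.sin (θ₀ u) ^ 2 - Real.sin (θ₁ u) ^ 2| ≤ |w u| := by
        rw [hsin, abs_mul]
        calc |Real.sin (θ₀ u + θ₁ u)| * |Real.sin (θ₀ u - θ₁ u)|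
            ≤ 1 * |Real.sin (θ₀ u - θ₁ u)| :=
              mul_le_mul_of_nonneg_right (Real.abs_sin_le_one _) (abs_nonneg _)
          _ = |Real.sin (w u)| := by rw [one_mul, habs2]
          _ ≤ |w u| := hsinw
      have hC : Real.cos (θ₁ u) ^ 2 - Real.cos (θ₀ u) ^ 2
          = Real.sin (θ₀ u) ^ 2 - Real.sin (θ₁ u) ^ 2 := by
        nlinarith [Real.sin_sq_add_cos_sq (θ₀ u), Real.sin_sq_add_cos_sq (θ₁ u)]
      have e1 : 0 ≤ (1 / p₁ u - 1 / p₀ u) * Real.cos (θ₀ u) ^ 2 :=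
        mul_nonneg (by linarith) (sq_nonneg _)
      have e2 : 0 ≤ ((q₀ u - lam₀ * r₀ u) - (q₁ u - lam₁ * r₁ u)) * Real.sin (θ₁ u) ^ 2 :=
        mul_nonneg (by linarith) (sq_nonneg _)
      have e3 : (1 / p₁ u) * (-|w u|) ≤ (1 / p₁ u) * (Real.sin (θ₀ u) ^ 2 - Real.sin (θ₁ u) ^ 2) :=
        mul_le_mul_of_nonneg_left (abs_le.mp hSS).1 (by linarith)
      have e4 : -(|q₀ u - lam₀ * r₀ u| * |w u|)
          ≤ (q₀ u - lam₀ * r₀ u) * (Real.sin (θ₀ u) ^ 2 - Real.sin (θ₁ u) ^ 2) := by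
        have h2 : |(q₀ u - lam₀ * r₀ u) * (Real.sin (θ₀ u) ^ 2 - Real.sin (θ₁ u) ^ 2)|
            ≤ |q₀ u - lam₀ * r₀ u| * |w u| := by
          rw [abs_mul]
          exact mul_le_mul_of_nonneg_left hSS (abs_nonneg _)
        linarith [neg_abs_le ((q₀ u - lam₀ * r₀ u) * (Real.sin (θ₀ u) ^ 2 - Real.sin (θ₁ u) ^ 2))]
      have e5 : (1 / p₁ u) * (Real.cos (θ₁ u) ^ 2 - Real.cos (θ₀ u) ^ 2)
          = (1 / p₁ u) * (Real.sin (θ₀ u) ^ 2 - Real.sin (θ₁ u) ^ 2) := by rw [hC]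
      show -((1 / p₁ u + |q₀ u - lam₀ * r₀ u|) * |w u|)
          ≤ (1 / p₁ u * Real.cos (θ₁ u) ^ 2 - (q₁ u - lam₁ * r₁ u) * Real.sin (θ₁ u) ^ 2) -
            (1 / p₀ u * Real.cos (θ₀ u) ^ 2 - (q₀ u - lam₀ * r₀ u) * Real.sin (θ₀ u) ^ 2)
      nlinarith [e1, e2, e3, e4, e5]
    constructor
    · intro hk
      have h0 : 0 ≤ w ξ := by show (0:ℝ) ≤ θ₁ ξ - θ₀ ξ - (k:ℝ) * π; linarith
      have h1 : (0:ℝ) ≤ θ₁ x - θ₀ x - (k:ℝ) * π :=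
        prufer_aux_nonneg hξx hw hDint hgint hg0 hle h0
      linarith
    · intro hk
      have h0 : 0 < w ξ := by show (0:ℝ) < θ₁ ξ - θ₀ ξ - (k:ℝ) * π; linarith
      have h1 : (0:ℝ) < θ₁ x - θ₀ x - (k:ℝ) * π :=
        prufer_aux_pos hξx hw hDint hgint hg0 hle h0
      linarith
  refine ⟨fun ξ hξ x hx hlt k hk => (key ξ hξ x hx hlt.le k).1 hk, ?_, ?_⟩
  · intro x hx y hy hxy
    show ⌈(θ₁ x - θ₀ x) / π⌉ - ⌊(θ₁ a - θ₀ a) / π⌋ - 1 ≤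
      ⌈(θ₁ y - θ₀ y) / π⌉ - ⌊(θ₁ a - θ₀ a) / π⌋ - 1
    have hceil : ⌈(θ₁ x - θ₀ x) / π⌉ ≤ ⌈(θ₁ y - θ₀ y) / π⌉ := by
      rcases eq_or_lt_of_le hxy with rfl | hlt
      · rfl
      have hx' : x ∈ Ico a b := ⟨hx.1.le, hx.2⟩
      have hy' : y ∈ Ico a b := ⟨hy.1.le, hy.2⟩
      have hc : ((⌈(θ₁ x - θ₀ x) / π⌉ : ℝ) - 1) < (θ₁ x - θ₀ x) / π := by
        have := Int.ceil_lt_add_one ((θ₁ x - θ₀ x) / π)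
        linarith
      have h1 : ((⌈(θ₁ x - θ₀ x) / π⌉ - 1 : ℤ) : ℝ) * π < θ₁ x - θ₀ x := by
        push_cast
        calc ((⌈(θ₁ x - θ₀ x) / π⌉ : ℝ) - 1) * π < ((θ₁ x - θ₀ x) / π) * π :=
              mul_lt_mul_of_pos_right hc hπ
          _ = θ₁ x - θ₀ x := div_mul_cancel₀ _ hπ.ne'
      have h2 := (key x hx' y hy' hlt.le (⌈(θ₁ x - θ₀ x) / π⌉ - 1)).2 h1
      have h4 : (⌈(θ₁ x - θ₀ x) / π⌉ - 1 : ℤ) < ⌈(θ₁ y - θ₀ y) / π⌉ := by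
        rw [Int.lt_ceil, lt_div_iff₀ hπ]
        exact h2
      omega
    omega
  · intro x hx
    have ha' : a ∈ Ico a b := ⟨le_refl a, hab⟩
    have hx' : x ∈ Ico a b := ⟨hx.1.le, hx.2⟩
    have h1 : ((⌊(θ₁ a - θ₀ a) / π⌋ : ℤ) : ℝ) * π ≤ θ₁ a - θ₀ a := by
      have := Int.floor_le ((θ₁ a - θ₀ a) / π)
      calc ((⌊(θ₁ a - θ₀ a) / π⌋ : ℤ) : ℝ) * π ≤ ((θ₁ a - θ₀ a) / π) * π :=
            mul_le_mul_of_nonneg_right this hπ.le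
        _ = θ₁ a - θ₀ a := div_mul_cancel₀ _ hπ.ne'
    have h2 : ((⌊(θ₁ a - θ₀ a) / π⌋ : ℤ) : ℝ) * π ≤ θ₁ x - θ₀ x :=
      (key a ha' x hx' hx.1.le ⌊(θ₁ a - θ₀ a) / π⌋).1 h1
    have h3 : ((⌊(θ₁ a - θ₀ a) / π⌋ : ℤ) : ℝ) ≤ (θ₁ x - θ₀ x) / π := by
      rw [le_div_iff₀ hπ]
      exact h2
    have h4 : ⌊(θ₁ a - θ₀ a) / π⌋ ≤ ⌈(θ₁ x - θ₀ x) / π⌉ := by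
      exact_mod_cast h3.trans (Int.le_ceil _)
    omega
end

section
/- Suppose τ₀ - λ₀ is nonoscillatory, i.e., some (hence every) nontrivial real solution u₀ of (τ₀ - λ₀)u = 0 has finitely many zeros in (a,b). Then τ₁ - λ₁ is relatively nonoscillatory with respect to τ₀ - λ₀ (i.e., liminf and limsup as x → b of N(u₀,u₁)(x) are both finite) if and only if τ₁ - λ₁ is nonoscillatory. -/
/-!
The zeros of `u₁` are the points where `θ₁ ∈ πℤ`, and at such a point `θ₁' = 1 / p₁ > 0`, so
`θ₁` crosses each multiple of `π` at most once, upwards. Hence `u₁` has finitely many zeros iff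
`θ₁` is bounded near `b`: finitely many zeros trap `θ₁` eventually in a strip `(kπ, (k+1)π)`,
while a bounded `θ₁` (bounded on all of `[a, b)` by compactness) meets only finitely many
multiples of `π`. The same strip argument bounds `θ₀`, so `N(u₀,u₁) ≈ (θ₁ - θ₀) / π` is bounded
near `b` iff `θ₁` is.
-/

open Real Set Filter Topology

theorem subsingleton_setOf_eq_of_sign_eq {f : ℝ → ℝ} {s : Set ℝ} {v : ℝ} (hs : s.OrdConnected)
    (hf : ContinuousOn f s)
    (hcross : ∀ z ∈ s, f z = v → ∀ᶠ t in 𝓝 z, SignType.sign (f t - v) = SignType.sign (t - z)) :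
    {z ∈ s | f z = v}.Subsingleton := by
  suffices ∀ x ∈ {z ∈ s | f z = v}, ∀ y ∈ {z ∈ s | f z = v}, ¬ x < y from
    fun x hx y hy => le_antisymm (not_lt.1 (this y hy x hx)) (not_lt.1 (this x hx y hy))
  rintro x ⟨hxs, hfx⟩ y ⟨hys, hfy⟩ hxy
  have hcont : ContinuousOn f (Icc x y) := hf.mono (hs.out hxs hys)
  -- continuous induction: `f` can only leave `[v, ∞)` through a downcrossing
  have hge : Icc x y ⊆ {t | v ≤ f t} := by
    refine IsClosed.Icc_subset_of_forall_mem_nhdsWithin ?_ hfx.ge ?_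
    · rw [inter_comm]
      exact hcont.preimage_isClosed_of_isClosed isClosed_Icc isClosed_Ici
    rintro t ⟨hvt : v ≤ f t, htx, hty⟩
    rcases hvt.eq_or_lt with hvt | hvt
    · filter_upwards [(hcross t (hs.out hxs hys ⟨htx, hty.le⟩) hvt.symm).filter_mono
        nhdsWithin_le_nhds, self_mem_nhdsWithin] with t' ht' (htt' : t < t')
      rw [sign_pos (sub_pos.2 htt'), sign_eq_one_iff, sub_pos] at ht'
      exact ht'.le
    · have : ∀ᶠ t' in 𝓝[Icc x y] t, v < f t' :=
        hcont t ⟨htx, hty.le⟩ |>.eventually (eventually_gt_nhds hvt)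
      exact (this.filter_mono (nhdsWithin_le_of_mem (Icc_mem_nhdsGT_of_mem ⟨htx, hty⟩))).mono
        fun _ => le_of_lt
  obtain ⟨t, ht, htxy⟩ := (((hcross y hys hfy).filter_mono nhdsWithin_le_nhds).and
    (Ioo_mem_nhdsLT hxy)).exists
  rw [sign_neg (sub_neg.2 htxy.2), sign_eq_neg_one_iff, sub_neg] at ht
  exact (hge (Ioo_subset_Icc_self htxy)).not_gt ht

theorem exists_forall_mem_Ioo_int_mul_pi {θ : ℝ → ℝ} {S : Set ℝ} (hS : IsPreconnected S)
    (hθ : ContinuousOn θ S) (hsin : ∀ t ∈ S, sin (θ t) ≠ 0) {t₀ : ℝ} (ht₀ : t₀ ∈ S) :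
    ∃ k : ℤ, ∀ t ∈ S, θ t ∈ Ioo (k * π) ((k + 1) * π) := by
  have hmiss : ∀ t ∈ S, ∀ n : ℤ, n * π ∉ Icc (θ t₀) (θ t) ∪ Icc (θ t) (θ t₀) := by
    rintro t ht n (hn | hn) <;>
    · obtain ⟨t', ht', hθt'⟩ := hS.intermediate_value (by assumption) (by assumption) hθ hn
      exact hsin t' ht' (by rw [hθt', sin_int_mul_pi])
  refine ⟨⌊θ t₀ / π⌋, fun t ht => ⟨?_, ?_⟩⟩
  · have hk : (⌊θ t₀ / π⌋ : ℝ) * π ≤ θ t₀ := (le_div_iff₀ pi_pos).1 (Int.floor_le _)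
    by_contra! h
    exact hmiss t ht _ (Or.inr ⟨h, hk⟩)
  · have hk : θ t₀ < (⌊θ t₀ / π⌋ + 1 : ℝ) * π := (div_lt_iff₀ pi_pos).1 (Int.lt_floor_add_one _)
    by_contra! h
    exact hmiss t ht (⌊θ t₀ / π⌋ + 1) (Or.inl ⟨by push_cast; exact hk.le, by exact_mod_cast h⟩)

theorem isBoundedUnder_abs_of_finite_sin_eq_zero {θ : ℝ → ℝ} {a b : ℝ} (hab : a < b)
    (hθ : ContinuousOn θ (Ioo a b)) (hfin : {x ∈ Ioo a b | sin (θ x) = 0}.Finite) :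
    IsBoundedUnder (· ≤ ·) (𝓝[<] b) fun x => |θ x| := by
  have hb : b ∉ {x ∈ Ioo a b | sin (θ x) = 0} := fun h => h.1.2.false
  have hev : ∀ᶠ x in 𝓝[<] b, x ∈ Ioo a b ∧ sin (θ x) ≠ 0 := by
    filter_upwards [Ioo_mem_nhdsLT hab,
      nhdsWithin_le_nhds (hfin.isClosed.compl_mem_nhds hb)] with x hx hxZ
    exact ⟨hx, fun h => hxZ ⟨hx, h⟩⟩
  obtain ⟨c, hcb, hc⟩ := mem_nhdsLT_iff_exists_Ioo_subset.1 hev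
  obtain ⟨k, hk⟩ := exists_forall_mem_Ioo_int_mul_pi isPreconnected_Ioo
    (hθ.mono fun t ht => (hc ht).1) (fun t ht => (hc ht).2) (exists_between hcb).choose_spec
  refine ⟨(|(k : ℝ)| + 1) * π, eventually_map.2 ?_⟩
  filter_upwards [Ioo_mem_nhdsLT hcb] with x hx
  obtain ⟨h₁, h₂⟩ := hk x hx
  have := neg_abs_le (k : ℝ)
  have := le_abs_self (k : ℝ)
  rw [abs_le]
  constructor <;> nlinarith [pi_pos]

theorem exists_forall_abs_le_of_isBoundedUnder {f : ℝ → ℝ} {a b : ℝ} (hf : ContinuousOn f (Ico a b))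
    (hbdd : IsBoundedUnder (· ≤ ·) (𝓝[<] b) fun x => |f x|) :
    ∃ M, ∀ x ∈ Ico a b, |f x| ≤ M := by
  obtain ⟨C, hC⟩ := hbdd
  obtain ⟨c, hcb, hc⟩ := mem_nhdsLT_iff_exists_Ioo_subset.1 (eventually_map.1 hC)
  obtain ⟨C', hC'⟩ := isCompact_Icc.exists_bound_of_continuousOn
    (hf.mono fun x hx => ⟨hx.1, hx.2.trans_lt hcb⟩)
  refine ⟨max C C', fun x hx => ?_⟩
  rcases le_or_gt x c with hxc | hxc
  · exact (hC' x ⟨hx.1, hxc⟩).trans (le_max_right _ _)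
  · exact (hc ⟨hxc, hx.2⟩ : |f x| ≤ C).trans (le_max_left _ _)

theorem finite_sin_eq_zero_of_abs_le {θ : ℝ → ℝ} {s : Set ℝ} {M : ℝ} (hs : s.OrdConnected)
    (hθ : ContinuousOn θ s) (hM : ∀ x ∈ s, |θ x| ≤ M)
    (hcross : ∀ z ∈ s, sin (θ z) = 0 →
      ∀ᶠ t in 𝓝 z, SignType.sign (θ t - θ z) = SignType.sign (t - z)) :
    {x ∈ s | sin (θ x) = 0}.Finite := by
  have hsub : {x ∈ s | sin (θ x) = 0} ⊆
      ⋃ n ∈ Finset.Icc (-⌊M / π⌋) ⌊M / π⌋, {x ∈ s | θ x = n * π} := by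
    rintro x ⟨hxs, hx⟩
    obtain ⟨n, hn⟩ := sin_eq_zero_iff.1 hx
    have hnM : |(n : ℝ)| * π ≤ M := by
      simpa [← hn, abs_mul, abs_of_pos pi_pos] using hM x hxs
    have hnN : |n| ≤ ⌊M / π⌋ := Int.le_floor.2 (by push_cast; rwa [le_div_iff₀ pi_pos])
    exact mem_iUnion₂.2 ⟨n, Finset.mem_Icc.2 (abs_le.1 hnN), hxs, hn.symm⟩
  refine (Set.Finite.biUnion (Finset.finite_toSet _) fun n _ => ?_).subset hsub
  refine (subsingleton_setOf_eq_of_sign_eq hs hθ fun z hz hθz => ?_).finite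
  simpa only [hθz] using hcross z hz (by rw [hθz, sin_int_mul_pi])

theorem isBoundedUnder_ceil_div_sub_iff {α : Type*} {l : Filter α} {g : α → ℝ} {c : ℝ}
    (hc : 0 < c) (m : ℤ) :
    (IsBoundedUnder (· ≤ ·) l (fun x => ⌈g x / c⌉ - m) ∧
        IsBoundedUnder (· ≥ ·) l (fun x => ⌈g x / c⌉ - m)) ↔
      IsBoundedUnder (· ≤ ·) l fun x => |g x| := by
  have hφ : Monotone fun y : ℝ => ⌈y / c⌉ - m := fun y y' h => by
    dsimp only
    gcongr
  have hsurj : ∀ n : ℤ, ⌈(n + m) * c / c⌉ - m = n := fun n => by simp [hc.ne']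
  rw [isBoundedUnder_le_abs]
  exact and_congr
    (hφ.isBoundedUnder_le_comp_iff (hφ.tendsto_atTop_atTop fun n => ⟨_, (hsurj n).ge⟩))
    (hφ.isBoundedUnder_ge_comp_iff (hφ.tendsto_atBot_atBot fun n => ⟨_, (hsurj n).le⟩))

theorem isBoundedUnder_abs_sub_iff {α : Type*} {l : Filter α} {f g : α → ℝ}
    (hg : IsBoundedUnder (· ≤ ·) l fun x => |g x|) :
    (IsBoundedUnder (· ≤ ·) l fun x => |f x - g x|) ↔ IsBoundedUnder (· ≤ ·) l fun x => |f x| :=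
  ⟨fun h => (isBoundedUnder_le_add h hg).mono_le (Eventually.of_forall fun x => by
    simpa using abs_add_le (f x - g x) (g x)),
   fun h => (isBoundedUnder_le_add h hg).mono_le (Eventually.of_forall fun x => abs_sub ..)⟩

theorem hasDerivAt_pruferAngle_of_eq_zero {p u pu ρ θ : ℝ → ℝ} {z : ℝ}
    (hu : HasDerivAt u (pu z / p z) z) (hpu : DifferentiableAt ℝ pu z)
    (hrep : ∀ᶠ t in 𝓝 z, 0 < ρ t ∧ u t = ρ t * sin (θ t) ∧ pu t = ρ t * cos (θ t))
    (hθ : ContinuousAt θ z) (hz : u z = 0) :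
    HasDerivAt θ (1 / p z) z := by
  obtain ⟨hρz, hsz, hcz⟩ := hrep.self_of_nhds
  have hsin : sin (θ z) = 0 := by
    simpa [hz, hρz.ne'] using hsz.symm
  obtain ⟨n, hn⟩ := sin_eq_zero_iff.mp hsin
  have hpuz : pu z ≠ 0 := by
    rw [hcz]
    exact mul_ne_zero hρz.ne' fun h => by simpa [hsin, h] using sin_sq_add_cos_sq (θ z)
  have hnear : ∀ᶠ t in 𝓝 z, θ t ∈ Ioo (n * π - π / 2) (n * π + π / 2) :=
    hθ.eventually (Ioo_mem_nhds (by rw [← hn]; linarith [pi_pos]) (by rw [← hn]; linarith [pi_pos]))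
  have heq : (fun t => n * π + arctan (u t / pu t)) =ᶠ[𝓝 z] θ := by
    filter_upwards [hrep, hnear] with t ⟨hρt, hst, hct⟩ ⟨h₁, h₂⟩
    rw [hst, hct, mul_div_mul_left _ _ hρt.ne', ← tan_eq_sin_div_cos,
      ← tan_sub_int_mul_pi _ n, arctan_tan (by linarith) (by linarith)]
    ring
  have hquot : HasDerivAt (fun t => u t / pu t) (1 / p z) z := by
    refine (hu.div hpu.hasDerivAt hpuz).congr_deriv ?_
    rw [hz, zero_mul, sub_zero, sq, div_mul_eq_mul_div, div_right_comm,
      div_self (mul_ne_zero hpuz hpuz)]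
  have := ((hasDerivAt_arctan _).comp z hquot).const_add (n * π)
  simpa [hz] using (this.congr_of_eventuallyEq heq.symm)

theorem setOf_eq_zero_eq_setOf_sin_eq_zero {s : Set ℝ} {u ρ θ : ℝ → ℝ}
    (hρ : ∀ x ∈ s, 0 < ρ x) (hs : ∀ x ∈ s, u x = ρ x * sin (θ x)) :
    {x ∈ s | u x = 0} = {x ∈ s | sin (θ x) = 0} := by
  ext x
  exact and_congr_right fun hx => by rw [hs x hx, mul_eq_zero, or_iff_right (hρ x hx).ne']

theorem finite_zeros_iff_isBoundedUnder_abs_pruferAngle {a b : ℝ} (hab : a < b)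
    {p u pu ρ θ : ℝ → ℝ} (hp : ∀ x ∈ Ico a b, 0 < p x)
    (hu : ∀ x ∈ Ico a b, HasDerivAt u (pu x / p x) x)
    (hpu : ∀ x ∈ Ico a b, DifferentiableAt ℝ pu x) (hρ : ∀ x ∈ Ico a b, 0 < ρ x)
    (hs : ∀ x ∈ Ico a b, u x = ρ x * sin (θ x)) (hc : ∀ x ∈ Ico a b, pu x = ρ x * cos (θ x))
    (hθ : ContinuousOn θ (Ico a b)) :
    {x ∈ Ioo a b | u x = 0}.Finite ↔ IsBoundedUnder (· ≤ ·) (𝓝[<] b) fun x => |θ x| := by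
  rw [setOf_eq_zero_eq_setOf_sin_eq_zero (fun x hx => hρ x (Ioo_subset_Ico_self hx))
    fun x hx => hs x (Ioo_subset_Ico_self hx)]
  refine ⟨isBoundedUnder_abs_of_finite_sin_eq_zero hab (hθ.mono Ioo_subset_Ico_self),
    fun hbdd => ?_⟩
  obtain ⟨M, hM⟩ := exists_forall_abs_le_of_isBoundedUnder hθ hbdd
  refine finite_sin_eq_zero_of_abs_le ordConnected_Ioo (hθ.mono Ioo_subset_Ico_self)
    (fun x hx => hM x (Ioo_subset_Ico_self hx)) fun z hz hsin => ?_
  have hzI : z ∈ Ico a b := Ioo_subset_Ico_self hz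
  have hnhds : Ico a b ∈ 𝓝 z := Ico_mem_nhds hz.1 hz.2
  have hderiv : HasDerivAt θ (1 / p z) z :=
    hasDerivAt_pruferAngle_of_eq_zero (hu z hzI) (hpu z hzI)
      (Filter.mem_of_superset hnhds fun x hx => ⟨hρ x hx, hs x hx, hc x hx⟩)
      (hθ.continuousAt hnhds) (by rw [hs z hzI, hsin, mul_zero])
  refine eventually_nhdsWithin_sign_eq_of_deriv_pos (f := fun t => θ t - θ z) ?_ (sub_self _)
  rw [(hderiv.sub_const _).deriv]
  exact one_div_pos.2 (hp z hzI)

theorem stmt_12_general (a b lam₁ : ℝ) (hab : a < b)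
    (p₁ q₁ r₁ u₀ u₁ pu₁ ρ₀ ρ₁ θ₀ θ₁ : ℝ → ℝ)
    (hp₁ : ∀ x ∈ Ico a b, 0 < p₁ x)
    (hu₁ : ∀ x ∈ Ico a b, HasDerivAt u₁ (pu₁ x / p₁ x) x)
    (hpu₁ : ∀ x ∈ Ico a b, HasDerivAt pu₁ ((q₁ x - lam₁ * r₁ x) * u₁ x) x)
    (hρ₀ : ∀ x ∈ Ico a b, 0 < ρ₀ x) (hρ₁ : ∀ x ∈ Ico a b, 0 < ρ₁ x)
    (hs₀ : ∀ x ∈ Ico a b, u₀ x = ρ₀ x * Real.sin (θ₀ x))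
    (hs₁ : ∀ x ∈ Ico a b, u₁ x = ρ₁ x * Real.sin (θ₁ x))
    (hc₁ : ∀ x ∈ Ico a b, pu₁ x = ρ₁ x * Real.cos (θ₁ x))
    (hθ₀ : ContinuousOn θ₀ (Ico a b)) (hθ₁ : ContinuousOn θ₁ (Ico a b))
    (hnonosc₀ : {x ∈ Ioo a b | u₀ x = 0}.Finite) :
    ({x ∈ Ioo a b | u₁ x = 0}.Finite ↔
      (IsBoundedUnder (· ≤ ·) (nhdsWithin b (Iio b))
          (fun x => ⌈(θ₁ x - θ₀ x) / π⌉ - ⌊(θ₁ a - θ₀ a) / π⌋ - 1) ∧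
       IsBoundedUnder (· ≥ ·) (nhdsWithin b (Iio b))
          (fun x => ⌈(θ₁ x - θ₀ x) / π⌉ - ⌊(θ₁ a - θ₀ a) / π⌋ - 1))) := by
  have hbdd₀ : IsBoundedUnder (· ≤ ·) (𝓝[<] b) fun x => |θ₀ x| :=
    isBoundedUnder_abs_of_finite_sin_eq_zero hab (hθ₀.mono Ioo_subset_Ico_self) <| by
      rwa [← setOf_eq_zero_eq_setOf_sin_eq_zero (fun x hx => hρ₀ x (Ioo_subset_Ico_self hx))
        fun x hx => hs₀ x (Ioo_subset_Ico_self hx)]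
  simp only [sub_sub]
  rw [isBoundedUnder_ceil_div_sub_iff pi_pos, isBoundedUnder_abs_sub_iff hbdd₀]
  exact finite_zeros_iff_isBoundedUnder_abs_pruferAngle hab hp₁ hu₁
    (fun x hx => (hpu₁ x hx).differentiableAt) hρ₁ hs₁ hc₁ hθ₁

/-- Lemma 2.6 ("MyLittlePony"). Suppose `τ₀ - λ₀` is nonoscillatory, i.e. the
nontrivial real solution `u₀` of `(τ₀ - λ₀)u = 0` has finitely many zeros in
`(a,b)`. Then `τ₁ - λ₁` is relatively nonoscillatory with respect to
`τ₀ - λ₀` — i.e. `liminf` and `limsup` as `x → b⁻` of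
`N(u₀,u₁)(x) = ⌈(θ₁(x)-θ₀(x))/π⌉ - ⌊(θ₁(a)-θ₀(a))/π⌋ - 1` are both finite,
expressed as eventual boundedness from above and below — if and only if
`τ₁ - λ₁` is nonoscillatory, i.e. `u₁` has finitely many zeros in `(a,b)`.
The solutions are given with quasi-derivatives `puⱼ = pⱼuⱼ'` and Prüfer
representations `uⱼ = ρⱼ sin θⱼ`, `puⱼ = ρⱼ cos θⱼ`, `ρⱼ > 0`. -/
theorem stmt_12 (a b lam₀ lam₁ : ℝ) (hab : a < b)
    (p₀ q₀ r₀ p₁ q₁ r₁ u₀ u₁ pu₀ pu₁ ρ₀ ρ₁ θ₀ θ₁ : ℝ → ℝ)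
    (hp₀ : ∀ x ∈ Ico a b, 0 < p₀ x) (hp₁ : ∀ x ∈ Ico a b, 0 < p₁ x)
    (hr₀ : ∀ x ∈ Ico a b, 0 < r₀ x) (hr₁ : ∀ x ∈ Ico a b, 0 < r₁ x)
    (hu₀ : ∀ x ∈ Ico a b, HasDerivAt u₀ (pu₀ x / p₀ x) x)
    (hpu₀ : ∀ x ∈ Ico a b, HasDerivAt pu₀ ((q₀ x - lam₀ * r₀ x) * u₀ x) x)
    (hu₁ : ∀ x ∈ Ico a b, HasDerivAt u₁ (pu₁ x / p₁ x) x)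
    (hpu₁ : ∀ x ∈ Ico a b, HasDerivAt pu₁ ((q₁ x - lam₁ * r₁ x) * u₁ x) x)
    (hρ₀ : ∀ x ∈ Ico a b, 0 < ρ₀ x) (hρ₁ : ∀ x ∈ Ico a b, 0 < ρ₁ x)
    (hs₀ : ∀ x ∈ Ico a b, u₀ x = ρ₀ x * Real.sin (θ₀ x))
    (hc₀ : ∀ x ∈ Ico a b, pu₀ x = ρ₀ x * Real.cos (θ₀ x))
    (hs₁ : ∀ x ∈ Ico a b, u₁ x = ρ₁ x * Real.sin (θ₁ x))
    (hc₁ : ∀ x ∈ Ico a b, pu₁ x = ρ₁ x * Real.cos (θ₁ x))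
    (hθ₀ : ContinuousOn θ₀ (Ico a b)) (hθ₁ : ContinuousOn θ₁ (Ico a b))
    (hnonosc₀ : {x ∈ Ioo a b | u₀ x = 0}.Finite) :
    ({x ∈ Ioo a b | u₁ x = 0}.Finite ↔
      (IsBoundedUnder (· ≤ ·) (nhdsWithin b (Iio b))
          (fun x => ⌈(θ₁ x - θ₀ x) / π⌉ - ⌊(θ₁ a - θ₀ a) / π⌋ - 1) ∧
       IsBoundedUnder (· ≥ ·) (nhdsWithin b (Iio b))
          (fun x => ⌈(θ₁ x - θ₀ x) / π⌉ - ⌊(θ₁ a - θ₀ a) / π⌋ - 1))) :=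
  stmt_12_general a b lam₁ hab p₁ q₁ r₁ u₀ u₁ pu₁ ρ₀ ρ₁ θ₀ θ₁ hp₁ hu₁ hpu₁ hρ₀ hρ₁ hs₀ hs₁ hc₁ hθ₀
    hθ₁ hnonosc₀
end

section
/- Relative nonoscillation does not depend on the choice of solutions: if u₀, v₀ are nontrivial real solutions of (τ₀-λ₀)u = 0 and u₁, v₁ nontrivial real solutions of (τ₁-λ₁)u = 0, then for all x ∈ (a,b): N(u₀,u₁)(x) - 4 ≤ N(v₀,v₁)(x) ≤ N(u₀,u₁)(x) + 2. In particular limsup_{x→b} N(u₀,u₁)(x) and liminf_{x→b} N(u₀,u₁)(x) are finite if and only if the corresponding limits for N(v₀,v₁) are finite. -/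
open Real Set Filter

/-! Along a solution pair of one equation the Wronskian `v·(p u') - u·(p v')` is constant and
equals `ρᵤ ρᵥ sin (θᵥ - θᵤ)`, so `θᵥ - θᵤ` is either a multiple of `π` at every point or at none.
By the intermediate value theorem `(θᵥ - θᵤ)/π` then cannot cross an integer, hence `N(u,v) ≤ 0`.
Combined with the subadditivity `N(u,w) ≤ N(u,v) + N(v,w) + 1` of the ceilings and floors,
`N(v₀,v₁) ≤ N(v₀,u₀) + N(u₀,u₁) + N(u₁,v₁) + 2 ≤ N(u₀,u₁) + 2`, and symmetrically. -/

/-- `N(u,v)(x)` written through the Prüfer angles `θu`, `θv`. -/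
noncomputable def relOsc (a : ℝ) (θu θv : ℝ → ℝ) (x : ℝ) : ℤ :=
  ⌈(θv x - θu x) / π⌉ - ⌊(θv a - θu a) / π⌋ - 1

/-- `u` solves `(p u')' = q u` on `[a, b)` with quasi-derivative `pu = p u'`, and `(ρ, θ)` are
Prüfer amplitude and angle: `u = ρ sin θ`, `pu = ρ cos θ`. -/
structure IsPruferSolution (a b : ℝ) (p q u pu ρ θ : ℝ → ℝ) : Prop where
  hasDerivAt : ∀ x ∈ Ico a b, HasDerivAt u (pu x / p x) x
  hasDerivAt_quasiDeriv : ∀ x ∈ Ico a b, HasDerivAt pu (q x * u x) x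
  amplitude_pos : ∀ x ∈ Ico a b, 0 < ρ x
  eq_mul_sin : ∀ x ∈ Ico a b, u x = ρ x * sin (θ x)
  quasiDeriv_eq_mul_cos : ∀ x ∈ Ico a b, pu x = ρ x * cos (θ x)
  continuousOn_angle : ContinuousOn θ (Ico a b)

lemma ceil_le_floor_add_one_of_isInt_iff {g : ℝ → ℝ} {a x : ℝ} (hax : a ≤ x)
    (hg : ContinuousOn g (Icc a x))
    (hint : ∀ t ∈ Icc a x, (∃ n : ℤ, g t = n) ↔ ∃ n : ℤ, g a = n) :
    ⌈g x⌉ ≤ ⌊g a⌋ + 1 := by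
  rw [Int.ceil_le, Int.cast_add, Int.cast_one]
  by_contra! hx
  have ivt : ∀ c ∈ Icc (g a) (g x), (∃ n : ℤ, c = n) ↔ ∃ n : ℤ, g a = n := by
    intro c hc
    obtain ⟨t, ht, rfl⟩ := intermediate_value_Icc hax hg hc
    exact hint t ht
  -- `g` reaches the integer `⌊g a⌋ + 1`, so `g a` is an integer, and then `g` also reaches
  -- the half-integer `⌊g a⌋ + 1/2`.
  have hga : ∃ n : ℤ, g a = n :=
    (ivt (⌊g a⌋ + 1) ⟨(Int.lt_floor_add_one _).le, hx.le⟩).1 ⟨⌊g a⌋ + 1, by push_cast; ring⟩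
  have hga_floor : g a = ⌊g a⌋ := by
    obtain ⟨n, hn⟩ := hga
    rw [hn, Int.floor_intCast]
  obtain ⟨k, hk⟩ := (ivt (⌊g a⌋ + 1 / 2) ⟨by linarith, by linarith⟩).2 hga
  have : 2 * k = 2 * ⌊g a⌋ + 1 := by
    exact_mod_cast (by linarith : (2 * k : ℝ) = 2 * ⌊g a⌋ + 1)
  omega

lemma exists_int_div_pi_eq_iff_sin_eq_zero (y : ℝ) : (∃ n : ℤ, y / π = n) ↔ sin y = 0 := by
  rw [sin_eq_zero_iff]
  exact exists_congr fun n => by rw [div_eq_iff pi_ne_zero, eq_comm]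

lemma wronskian_eq_of_hasDerivAt {a b : ℝ} {p q u v pu pv : ℝ → ℝ}
    (hu : ∀ x ∈ Ico a b, HasDerivAt u (pu x / p x) x)
    (hpu : ∀ x ∈ Ico a b, HasDerivAt pu (q x * u x) x)
    (hv : ∀ x ∈ Ico a b, HasDerivAt v (pv x / p x) x)
    (hpv : ∀ x ∈ Ico a b, HasDerivAt pv (q x * v x) x) {x : ℝ} (hx : x ∈ Ico a b) :
    v x * pu x - u x * pv x = v a * pu a - u a * pv a := by
  have hsub : Icc a x ⊆ Ico a b := Icc_subset_Ico_right hx.2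
  have hW : ∀ t ∈ Icc a x, HasDerivAt (fun t => v t * pu t - u t * pv t) 0 t := fun t ht =>
    (((hv t (hsub ht)).mul (hpu t (hsub ht))).sub
      ((hu t (hsub ht)).mul (hpv t (hsub ht)))).congr_deriv (by ring)
  exact constant_of_has_deriv_right_zero (fun t ht => (hW t ht).continuousAt.continuousWithinAt)
    (fun t ht => (hW t (Ico_subset_Icc_self ht)).hasDerivWithinAt) x ⟨hx.1, le_rfl⟩

lemma IsPruferSolution.relOsc_nonpos {a b : ℝ} {p q u pu ρu θu v pv ρv θv : ℝ → ℝ}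
    (hu : IsPruferSolution a b p q u pu ρu θu) (hv : IsPruferSolution a b p q v pv ρv θv)
    {x : ℝ} (hx : x ∈ Ico a b) : relOsc a θu θv x ≤ 0 := by
  have ha : a ∈ Ico a b := ⟨le_rfl, hx.1.trans_lt hx.2⟩
  have hsub : Icc a x ⊆ Ico a b := Icc_subset_Ico_right hx.2
  have hW : ∀ t ∈ Ico a b, v t * pu t - u t * pv t = ρu t * ρv t * sin (θv t - θu t) := by
    intro t ht
    rw [hu.eq_mul_sin t ht, hu.quasiDeriv_eq_mul_cos t ht, hv.eq_mul_sin t ht,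
      hv.quasiDeriv_eq_mul_cos t ht, sin_sub]
    ring
  have hρ : ∀ t ∈ Ico a b, ρu t * ρv t ≠ 0 := fun t ht =>
    (mul_pos (hu.amplitude_pos t ht) (hv.amplitude_pos t ht)).ne'
  have hint : ∀ t ∈ Icc a x,
      (∃ n : ℤ, (θv t - θu t) / π = n) ↔ ∃ n : ℤ, (θv a - θu a) / π = n := by
    intro t ht
    rw [exists_int_div_pi_eq_iff_sin_eq_zero, exists_int_div_pi_eq_iff_sin_eq_zero,
      ← mul_eq_zero_iff_left (hρ t (hsub ht)), ← hW t (hsub ht),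
      wronskian_eq_of_hasDerivAt hu.hasDerivAt hu.hasDerivAt_quasiDeriv hv.hasDerivAt
        hv.hasDerivAt_quasiDeriv (hsub ht), hW a ha, mul_eq_zero_iff_left (hρ a ha)]
  have hg : ContinuousOn (fun t => (θv t - θu t) / π) (Icc a x) :=
    ((hv.continuousOn_angle.mono hsub).sub (hu.continuousOn_angle.mono hsub)).div_const π
  have := ceil_le_floor_add_one_of_isInt_iff hx.1 hg hint
  unfold relOsc
  omega

lemma relOsc_le_add_add_one (a : ℝ) (θu θv θw : ℝ → ℝ) (x : ℝ) :
    relOsc a θu θw x ≤ relOsc a θu θv x + relOsc a θv θw x + 1 := by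
  have hsplit : ∀ y, (θw y - θu y) / π = (θv y - θu y) / π + (θw y - θv y) / π := fun y => by
    ring
  have := Int.ceil_add_le ((θv x - θu x) / π) ((θw x - θv x) / π)
  have := Int.le_floor_add ((θv a - θu a) / π) ((θw a - θv a) / π)
  unfold relOsc
  rw [hsplit x, hsplit a]
  omega

lemma relOsc_le_relOsc_add_two {a x : ℝ} {θu₀ θv₀ θu₁ θv₁ : ℝ → ℝ}
    (h₀ : relOsc a θv₀ θu₀ x ≤ 0) (h₁ : relOsc a θu₁ θv₁ x ≤ 0) :
    relOsc a θv₀ θv₁ x ≤ relOsc a θu₀ θu₁ x + 2 := by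
  have := relOsc_le_add_add_one a θv₀ θu₀ θv₁ x
  have := relOsc_le_add_add_one a θu₀ θu₁ θv₁ x
  omega

section Bounded

variable {α R : Type*} [AddCommGroup R] [PartialOrder R] [IsOrderedAddMonoid R]
  {l : Filter α} {f g : α → R} {c : R}

lemma isBoundedUnder_le_and_ge_of_eventually_le_add (hfg : ∀ᶠ x in l, f x ≤ g x + c)
    (hgf : ∀ᶠ x in l, g x ≤ f x + c)
    (hg : IsBoundedUnder (· ≤ ·) l g ∧ IsBoundedUnder (· ≥ ·) l g) :
    IsBoundedUnder (· ≤ ·) l f ∧ IsBoundedUnder (· ≥ ·) l f :=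
  ⟨(isBoundedUnder_le_add hg.1 isBoundedUnder_const).mono_le hfg,
    (isBoundedUnder_ge_add hg.2 (isBoundedUnder_const (a := -c))).mono_ge
      (hgf.mono fun _ h => by simpa [← sub_eq_add_neg, sub_le_iff_le_add] using h)⟩

lemma isBoundedUnder_le_and_ge_iff_of_eventually_le_add (hfg : ∀ᶠ x in l, f x ≤ g x + c)
    (hgf : ∀ᶠ x in l, g x ≤ f x + c) :
    (IsBoundedUnder (· ≤ ·) l f ∧ IsBoundedUnder (· ≥ ·) l f) ↔
      (IsBoundedUnder (· ≤ ·) l g ∧ IsBoundedUnder (· ≥ ·) l g) :=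
  ⟨isBoundedUnder_le_and_ge_of_eventually_le_add hgf hfg,
    isBoundedUnder_le_and_ge_of_eventually_le_add hfg hgf⟩

end Bounded

theorem stmt_13_general (a b lam₀ lam₁ : ℝ) (hab : a < b)
    (p₀ q₀ r₀ p₁ q₁ r₁ : ℝ → ℝ)
    (u₀ v₀ u₁ v₁ pu₀ pv₀ pu₁ pv₁ ρu₀ ρv₀ ρu₁ ρv₁ θu₀ θv₀ θu₁ θv₁ : ℝ → ℝ)
    (hu₀ : ∀ x ∈ Ico a b, HasDerivAt u₀ (pu₀ x / p₀ x) x)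
    (hpu₀ : ∀ x ∈ Ico a b, HasDerivAt pu₀ ((q₀ x - lam₀ * r₀ x) * u₀ x) x)
    (hv₀ : ∀ x ∈ Ico a b, HasDerivAt v₀ (pv₀ x / p₀ x) x)
    (hpv₀ : ∀ x ∈ Ico a b, HasDerivAt pv₀ ((q₀ x - lam₀ * r₀ x) * v₀ x) x)
    (hu₁ : ∀ x ∈ Ico a b, HasDerivAt u₁ (pu₁ x / p₁ x) x)
    (hpu₁ : ∀ x ∈ Ico a b, HasDerivAt pu₁ ((q₁ x - lam₁ * r₁ x) * u₁ x) x)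
    (hv₁ : ∀ x ∈ Ico a b, HasDerivAt v₁ (pv₁ x / p₁ x) x)
    (hpv₁ : ∀ x ∈ Ico a b, HasDerivAt pv₁ ((q₁ x - lam₁ * r₁ x) * v₁ x) x)
    (hρu₀ : ∀ x ∈ Ico a b, 0 < ρu₀ x) (hρv₀ : ∀ x ∈ Ico a b, 0 < ρv₀ x)
    (hρu₁ : ∀ x ∈ Ico a b, 0 < ρu₁ x) (hρv₁ : ∀ x ∈ Ico a b, 0 < ρv₁ x)
    (hsu₀ : ∀ x ∈ Ico a b, u₀ x = ρu₀ x * Real.sin (θu₀ x))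
    (hcu₀ : ∀ x ∈ Ico a b, pu₀ x = ρu₀ x * Real.cos (θu₀ x))
    (hsv₀ : ∀ x ∈ Ico a b, v₀ x = ρv₀ x * Real.sin (θv₀ x))
    (hcv₀ : ∀ x ∈ Ico a b, pv₀ x = ρv₀ x * Real.cos (θv₀ x))
    (hsu₁ : ∀ x ∈ Ico a b, u₁ x = ρu₁ x * Real.sin (θu₁ x))
    (hcu₁ : ∀ x ∈ Ico a b, pu₁ x = ρu₁ x * Real.cos (θu₁ x))
    (hsv₁ : ∀ x ∈ Ico a b, v₁ x = ρv₁ x * Real.sin (θv₁ x))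
    (hcv₁ : ∀ x ∈ Ico a b, pv₁ x = ρv₁ x * Real.cos (θv₁ x))
    (hθu₀ : ContinuousOn θu₀ (Ico a b)) (hθv₀ : ContinuousOn θv₀ (Ico a b))
    (hθu₁ : ContinuousOn θu₁ (Ico a b)) (hθv₁ : ContinuousOn θv₁ (Ico a b)) :
    (∀ x ∈ Ioo a b,
      (⌈(θu₁ x - θu₀ x) / π⌉ - ⌊(θu₁ a - θu₀ a) / π⌋ - 1) - 4
        ≤ ⌈(θv₁ x - θv₀ x) / π⌉ - ⌊(θv₁ a - θv₀ a) / π⌋ - 1 ∧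
      ⌈(θv₁ x - θv₀ x) / π⌉ - ⌊(θv₁ a - θv₀ a) / π⌋ - 1
        ≤ (⌈(θu₁ x - θu₀ x) / π⌉ - ⌊(θu₁ a - θu₀ a) / π⌋ - 1) + 2) ∧
    ((IsBoundedUnder (· ≤ ·) (nhdsWithin b (Iio b))
          (fun x => ⌈(θu₁ x - θu₀ x) / π⌉ - ⌊(θu₁ a - θu₀ a) / π⌋ - 1) ∧
      IsBoundedUnder (· ≥ ·) (nhdsWithin b (Iio b))
          (fun x => ⌈(θu₁ x - θu₀ x) / π⌉ - ⌊(θu₁ a - θu₀ a) / π⌋ - 1)) ↔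
     (IsBoundedUnder (· ≤ ·) (nhdsWithin b (Iio b))
          (fun x => ⌈(θv₁ x - θv₀ x) / π⌉ - ⌊(θv₁ a - θv₀ a) / π⌋ - 1) ∧
      IsBoundedUnder (· ≥ ·) (nhdsWithin b (Iio b))
          (fun x => ⌈(θv₁ x - θv₀ x) / π⌉ - ⌊(θv₁ a - θv₀ a) / π⌋ - 1))) := by
  have Su₀ : IsPruferSolution a b p₀ (fun x => q₀ x - lam₀ * r₀ x) u₀ pu₀ ρu₀ θu₀ :=
    ⟨hu₀, hpu₀, hρu₀, hsu₀, hcu₀, hθu₀⟩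
  have Sv₀ : IsPruferSolution a b p₀ (fun x => q₀ x - lam₀ * r₀ x) v₀ pv₀ ρv₀ θv₀ :=
    ⟨hv₀, hpv₀, hρv₀, hsv₀, hcv₀, hθv₀⟩
  have Su₁ : IsPruferSolution a b p₁ (fun x => q₁ x - lam₁ * r₁ x) u₁ pu₁ ρu₁ θu₁ :=
    ⟨hu₁, hpu₁, hρu₁, hsu₁, hcu₁, hθu₁⟩
  have Sv₁ : IsPruferSolution a b p₁ (fun x => q₁ x - lam₁ * r₁ x) v₁ pv₁ ρv₁ θv₁ :=
    ⟨hv₁, hpv₁, hρv₁, hsv₁, hcv₁, hθv₁⟩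
  have hvu : ∀ x ∈ Ioo a b, relOsc a θv₀ θv₁ x ≤ relOsc a θu₀ θu₁ x + 2 := fun x hx =>
    relOsc_le_relOsc_add_two (Sv₀.relOsc_nonpos Su₀ (Ioo_subset_Ico_self hx))
      (Su₁.relOsc_nonpos Sv₁ (Ioo_subset_Ico_self hx))
  have huv : ∀ x ∈ Ioo a b, relOsc a θu₀ θu₁ x ≤ relOsc a θv₀ θv₁ x + 2 := fun x hx =>
    relOsc_le_relOsc_add_two (Su₀.relOsc_nonpos Sv₀ (Ioo_subset_Ico_self hx))
      (Sv₁.relOsc_nonpos Su₁ (Ioo_subset_Ico_self hx))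
  have hev : ∀ᶠ x in nhdsWithin b (Iio b), x ∈ Ioo a b := Ioo_mem_nhdsLT hab
  refine ⟨fun x hx => ⟨?_, hvu x hx⟩, isBoundedUnder_le_and_ge_iff_of_eventually_le_add
    (hev.mono huv) (hev.mono hvu)⟩
  have := huv x hx
  unfold relOsc at this
  omega

/-- Independence of relative (non)oscillation of the chosen solutions. Let
`u₀, v₀` be nontrivial real solutions of `(τ₀-λ₀)u = 0` and `u₁, v₁`
nontrivial real solutions of `(τ₁-λ₁)u = 0`, with quasi-derivatives and
Prüfer representations as usual. With
`N(u,v)(x) = ⌈(θᵥ(x)-θᵤ(x))/π⌉ - ⌊(θᵥ(a)-θᵤ(a))/π⌋ - 1`, one has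
`N(u₀,u₁)(x) - 4 ≤ N(v₀,v₁)(x) ≤ N(u₀,u₁)(x) + 2` for all `x ∈ (a,b)`;
in particular the limsup and liminf of `N(u₀,u₁)` as `x → b⁻` are finite
(eventually bounded above resp. below) iff the same holds for `N(v₀,v₁)`. -/
theorem stmt_13 (a b lam₀ lam₁ : ℝ) (hab : a < b)
    (p₀ q₀ r₀ p₁ q₁ r₁ : ℝ → ℝ)
    (u₀ v₀ u₁ v₁ pu₀ pv₀ pu₁ pv₁ ρu₀ ρv₀ ρu₁ ρv₁ θu₀ θv₀ θu₁ θv₁ : ℝ → ℝ)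
    (hp₀ : ∀ x ∈ Ico a b, 0 < p₀ x) (hp₁ : ∀ x ∈ Ico a b, 0 < p₁ x)
    (hr₀ : ∀ x ∈ Ico a b, 0 < r₀ x) (hr₁ : ∀ x ∈ Ico a b, 0 < r₁ x)
    (hu₀ : ∀ x ∈ Ico a b, HasDerivAt u₀ (pu₀ x / p₀ x) x)
    (hpu₀ : ∀ x ∈ Ico a b, HasDerivAt pu₀ ((q₀ x - lam₀ * r₀ x) * u₀ x) x)
    (hv₀ : ∀ x ∈ Ico a b, HasDerivAt v₀ (pv₀ x / p₀ x) x)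
    (hpv₀ : ∀ x ∈ Ico a b, HasDerivAt pv₀ ((q₀ x - lam₀ * r₀ x) * v₀ x) x)
    (hu₁ : ∀ x ∈ Ico a b, HasDerivAt u₁ (pu₁ x / p₁ x) x)
    (hpu₁ : ∀ x ∈ Ico a b, HasDerivAt pu₁ ((q₁ x - lam₁ * r₁ x) * u₁ x) x)
    (hv₁ : ∀ x ∈ Ico a b, HasDerivAt v₁ (pv₁ x / p₁ x) x)
    (hpv₁ : ∀ x ∈ Ico a b, HasDerivAt pv₁ ((q₁ x - lam₁ * r₁ x) * v₁ x) x)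
    (hρu₀ : ∀ x ∈ Ico a b, 0 < ρu₀ x) (hρv₀ : ∀ x ∈ Ico a b, 0 < ρv₀ x)
    (hρu₁ : ∀ x ∈ Ico a b, 0 < ρu₁ x) (hρv₁ : ∀ x ∈ Ico a b, 0 < ρv₁ x)
    (hsu₀ : ∀ x ∈ Ico a b, u₀ x = ρu₀ x * Real.sin (θu₀ x))
    (hcu₀ : ∀ x ∈ Ico a b, pu₀ x = ρu₀ x * Real.cos (θu₀ x))
    (hsv₀ : ∀ x ∈ Ico a b, v₀ x = ρv₀ x * Real.sin (θv₀ x))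
    (hcv₀ : ∀ x ∈ Ico a b, pv₀ x = ρv₀ x * Real.cos (θv₀ x))
    (hsu₁ : ∀ x ∈ Ico a b, u₁ x = ρu₁ x * Real.sin (θu₁ x))
    (hcu₁ : ∀ x ∈ Ico a b, pu₁ x = ρu₁ x * Real.cos (θu₁ x))
    (hsv₁ : ∀ x ∈ Ico a b, v₁ x = ρv₁ x * Real.sin (θv₁ x))
    (hcv₁ : ∀ x ∈ Ico a b, pv₁ x = ρv₁ x * Real.cos (θv₁ x))
    (hθu₀ : ContinuousOn θu₀ (Ico a b)) (hθv₀ : ContinuousOn θv₀ (Ico a b))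
    (hθu₁ : ContinuousOn θu₁ (Ico a b)) (hθv₁ : ContinuousOn θv₁ (Ico a b)) :
    (∀ x ∈ Ioo a b,
      (⌈(θu₁ x - θu₀ x) / π⌉ - ⌊(θu₁ a - θu₀ a) / π⌋ - 1) - 4
        ≤ ⌈(θv₁ x - θv₀ x) / π⌉ - ⌊(θv₁ a - θv₀ a) / π⌋ - 1 ∧
      ⌈(θv₁ x - θv₀ x) / π⌉ - ⌊(θv₁ a - θv₀ a) / π⌋ - 1
        ≤ (⌈(θu₁ x - θu₀ x) / π⌉ - ⌊(θu₁ a - θu₀ a) / π⌋ - 1) + 2) ∧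
    ((IsBoundedUnder (· ≤ ·) (nhdsWithin b (Iio b))
          (fun x => ⌈(θu₁ x - θu₀ x) / π⌉ - ⌊(θu₁ a - θu₀ a) / π⌋ - 1) ∧
      IsBoundedUnder (· ≥ ·) (nhdsWithin b (Iio b))
          (fun x => ⌈(θu₁ x - θu₀ x) / π⌉ - ⌊(θu₁ a - θu₀ a) / π⌋ - 1)) ↔
     (IsBoundedUnder (· ≤ ·) (nhdsWithin b (Iio b))
          (fun x => ⌈(θv₁ x - θv₀ x) / π⌉ - ⌊(θv₁ a - θv₀ a) / π⌋ - 1) ∧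
      IsBoundedUnder (· ≥ ·) (nhdsWithin b (Iio b))
          (fun x => ⌈(θv₁ x - θv₀ x) / π⌉ - ⌊(θv₁ a - θv₀ a) / π⌋ - 1))) :=
  stmt_13_general a b lam₀ lam₁ hab p₀ q₀ r₀ p₁ q₁ r₁ u₀ v₀ u₁ v₁ pu₀ pv₀ pu₁ pv₁ ρu₀ ρv₀ ρu₁ ρv₁
    θu₀ θv₀ θu₁ θv₁ hu₀ hpu₀ hv₀ hpv₀ hu₁ hpu₁ hv₁ hpv₁ hρu₀ hρv₀ hρu₁ hρv₁ hsu₀ hcu₀ hsv₀ hcv₀ hsu₁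
    hcu₁ hsv₁ hcv₁ hθu₀ hθv₀ hθu₁ hθv₁
end

section
/- Define Q_n(x) = -(1/4) ∑_{j=0}^{n-1} 1/L_j(x)² where L_j(x) = ∏_{i=0}^j log_i(x), and u₀(x) = √(L_{n-1}(x)) (with L_{-1}(x) = 1). Then for x > e_n the function u₀ satisfies the second-order equation -u₀''(x) + Q_n(x) u₀(x) = 0. -/
open Real Finset

/-- Iterated logarithm: `log₀(x) = x`, `log_{n+1}(x) = log(log_n x)`
(`Real.log` satisfies `Real.log x = Real.log |x|`, matching the paper's
convention `log x := log |x|` for negative arguments). -/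
noncomputable def iterLog : ℕ → ℝ → ℝ
  | 0, x => x
  | n + 1, x => Real.log (iterLog n x)

/-- `L_n(x) = ∏_{j=0}^n log_j(x)`. -/
noncomputable def iterL (n : ℕ) (x : ℝ) : ℝ :=
  ∏ j ∈ Finset.range (n + 1), iterLog j x

/-- `e_n`: `e₋₁ = -∞`, `e_n = exp(e_{n-1})`, so `e₀ = 0` and
`e_{n+1} = exp (e_n)`; `log_n` is positive on `(e_n, ∞)`. -/
noncomputable def iterE : ℕ → ℝ
  | 0 => 0
  | n + 1 => Real.exp (iterE n)

/-- `L_{n-1}` with the convention `L_{-1} = 1`. -/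
noncomputable def iterLm : ℕ → ℝ → ℝ
  | 0, _ => 1
  | n + 1, x => iterL n x

/-- `Q_n(x) = -(1/4) ∑_{j=0}^{n-1} 1/L_j(x)²`. -/
noncomputable def iterQ (n : ℕ) (x : ℝ) : ℝ :=
  -(1 / 4) * ∑ j ∈ Finset.range n, 1 / iterL j x ^ 2

/-! With `s = ∑_{j<n} 1/L_j` the logarithmic derivative of `L_{n-1}`, we get
`u₀' = u₀ s / 2` and `u₀'' = u₀ (s² + 2 s') / 4`. Differentiating `1/L_j` gives
`s' = -∑_{j<n} (∑_{i≤j} 1/L_i) / L_j = -(s² + ∑_{j<n} 1/L_j²) / 2`, a Riccati equation,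
so `u₀'' = -(1/4) (∑_{j<n} 1/L_j²) u₀ = Q_n u₀`. -/

lemma iterE_mono : Monotone iterE :=
  monotone_nat_of_le_succ fun n => by
    simp only [iterE]
    linarith [Real.add_one_le_exp (iterE n)]

lemma iterE_lt_iterLog {k j : ℕ} {x : ℝ} (hx : iterE (k + j) < x) :
    iterE k < iterLog j x := by
  induction j generalizing k with
  | zero => simpa [iterLog] using hx
  | succ j ih =>
    have h : iterE (k + 1) < iterLog j x := ih (by rwa [show k + 1 + j = k + (j + 1) by omega])
    have hpos : 0 < iterLog j x := (Real.exp_pos _).trans h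
    exact (Real.lt_log_iff_exp_lt hpos).2 h

lemma iterLog_pos {n j : ℕ} {x : ℝ} (hx : iterE n < x) (hj : j ≤ n) : 0 < iterLog j x := by
  simpa [iterE] using
    iterE_lt_iterLog (k := 0) (j := j) (by simpa using (iterE_mono hj).trans_lt hx)

lemma iterL_pos {n : ℕ} {x : ℝ} (hx : iterE n < x) : 0 < iterL n x :=
  prod_pos fun _ hj => iterLog_pos hx (Nat.lt_succ_iff.1 (mem_range.1 hj))

lemma iterLm_pos {n : ℕ} {x : ℝ} (hx : iterE n < x) : 0 < iterLm n x := by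
  cases n with
  | zero => exact one_pos
  | succ n => exact iterL_pos ((iterE_mono n.le_succ).trans_lt hx)

lemma iterL_succ (n : ℕ) (x : ℝ) : iterL (n + 1) x = iterL n x * iterLog (n + 1) x :=
  prod_range_succ _ _

lemma hasDerivAt_iterLog_succ {n : ℕ} {x : ℝ} (hx : iterE n < x) :
    HasDerivAt (iterLog (n + 1)) (iterL n x)⁻¹ x := by
  induction n with
  | zero =>
    simpa [iterLog, iterL] using Real.hasDerivAt_log (ne_of_gt (by simpa [iterE] using hx))
  | succ n ih =>
    have hlog := (Real.hasDerivAt_log (iterLog_pos hx le_rfl).ne').comp x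
      (ih ((iterE_mono n.le_succ).trans_lt hx))
    rw [iterL_succ, mul_inv, mul_comm]
    exact hlog

lemma hasDerivAt_iterL {n : ℕ} {x : ℝ} (hx : iterE n < x) :
    HasDerivAt (iterL n) (iterL n x * ∑ j ∈ range (n + 1), (iterL j x)⁻¹) x := by
  induction n with
  | zero =>
    have hid : iterL 0 = id := funext fun y => by simp [iterL, iterLog]
    have hx0 : x ≠ 0 := ne_of_gt (by simpa [iterE] using hx)
    rw [hid]
    simpa [iterL, iterLog, hx0] using hasDerivAt_id x
  | succ n ih =>
    have hxn : iterE n < x := (iterE_mono n.le_succ).trans_lt hx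
    have hprod := (ih hxn).mul (hasDerivAt_iterLog_succ hxn)
    have hLn := (iterL_pos hxn).ne'
    have hLn1 := (iterL_pos hx).ne'
    rw [show iterL n * iterLog (n + 1) = iterL (n + 1) from funext fun y => (iterL_succ n y).symm]
      at hprod
    refine hprod.congr_deriv ?_
    rw [mul_inv_cancel₀ hLn, sum_range_succ _ (n + 1), mul_add, mul_inv_cancel₀ hLn1, iterL_succ]
    ring

lemma hasDerivAt_iterLm {n : ℕ} {x : ℝ} (hx : iterE n < x) :
    HasDerivAt (iterLm n) (iterLm n x * ∑ j ∈ range n, (iterL j x)⁻¹) x := by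
  cases n with
  | zero => exact (hasDerivAt_const x (1 : ℝ)).congr_deriv (by simp)
  | succ n => exact hasDerivAt_iterL ((iterE_mono n.le_succ).trans_lt hx)

lemma two_mul_sum_range_prefix_mul {R : Type*} [CommRing R] (a : ℕ → R) (N : ℕ) :
    2 * ∑ j ∈ range N, (∑ i ∈ range (j + 1), a i) * a j =
      (∑ j ∈ range N, a j) ^ 2 + ∑ j ∈ range N, a j ^ 2 := by
  induction N with
  | zero => simp
  | succ N ih =>
    simp only [sum_range_succ _ N] at ih ⊢
    linear_combination ih

lemma hasDerivAt_sum_inv_iterL {n : ℕ} {x : ℝ} (hx : iterE n < x) :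
    HasDerivAt (fun y => ∑ j ∈ range n, (iterL j y)⁻¹)
      (-((∑ j ∈ range n, (iterL j x)⁻¹) ^ 2 + ∑ j ∈ range n, 1 / iterL j x ^ 2) / 2) x := by
  have hterm : ∀ j ∈ range n, HasDerivAt (fun y => (iterL j y)⁻¹)
      (-((∑ i ∈ range (j + 1), (iterL i x)⁻¹) * (iterL j x)⁻¹)) x := by
    intro j hj
    have hxj : iterE j < x := (iterE_mono (mem_range.1 hj).le).trans_lt hx
    refine ((hasDerivAt_iterL hxj).inv (iterL_pos hxj).ne').congr_deriv ?_
    field_simp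
  refine (HasDerivAt.fun_sum hterm).congr_deriv ?_
  rw [sum_neg_distrib]
  simp only [one_div, ← inv_pow]
  linear_combination (-1 / 2 : ℝ) * two_mul_sum_range_prefix_mul (fun j => (iterL j x)⁻¹) n

lemma hasDerivAt_sqrt_of_logDeriv {f : ℝ → ℝ} {x s₀ : ℝ} (hf : HasDerivAt f (f x * s₀) x)
    (hpos : 0 < f x) :
    HasDerivAt (fun y => √(f y)) (√(f x) * s₀ / 2) x := by
  refine (hf.sqrt hpos.ne').congr_deriv ?_
  have : √(f x) ≠ 0 := (Real.sqrt_pos.2 hpos).ne'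
  field_simp
  linear_combination (-s₀) * Real.sq_sqrt hpos.le

lemma hasDerivAt_sqrt_mul_div_two_of_riccati {f s : ℝ → ℝ} {x t : ℝ}
    (hf : HasDerivAt f (f x * s x) x) (hs : HasDerivAt s (-(s x ^ 2 + t) / 2) x) (hpos : 0 < f x) :
    HasDerivAt (fun y => √(f y) * s y / 2) (-(1 / 4) * t * √(f x)) x := by
  refine (((hasDerivAt_sqrt_of_logDeriv hf hpos).mul hs).div_const 2).congr_deriv ?_
  ring

/-- The function `u₀(x) = √(L_{n-1}(x))` satisfies `-u₀'' + Q_n u₀ = 0`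
on `(e_n, ∞)`. -/
theorem stmt_16 (n : ℕ) :
    ∃ u₀' u₀'' : ℝ → ℝ, ∀ x > iterE n,
      HasDerivAt (fun y => Real.sqrt (iterLm n y)) (u₀' x) x ∧
      HasDerivAt u₀' (u₀'' x) x ∧
      -u₀'' x + iterQ n x * Real.sqrt (iterLm n x) = 0 := by
  refine ⟨fun y => √(iterLm n y) * (∑ j ∈ range n, (iterL j y)⁻¹) / 2,
    fun y => iterQ n y * √(iterLm n y), fun x hx => ⟨?_, ?_, neg_add_cancel _⟩⟩
  · exact hasDerivAt_sqrt_of_logDeriv (hasDerivAt_iterLm hx) (iterLm_pos hx)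
  · exact hasDerivAt_sqrt_mul_div_two_of_riccati (hasDerivAt_iterLm hx)
      (hasDerivAt_sum_inv_iterL hx) (iterLm_pos hx)
end
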